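/- arXiv:0907.0840 — 15 statements merged into one kernel-verified Lean document; each statement's English description precedes it below -/
import Mathlib

section
/- Let I and J be finite nonempty sets, let P be an irreducible stochastic matrix on I with stationary distribution π, let H be an entrywise nonnegative I×J matrix each of whose columns contains a strictly positive entry, and let P̂ be an entrywise nonnegative J×J matrix satisfying the duality relation H·P̂ᵀ = P·H. Then: (a) P̂·Hᵀ·D_π = Hᵀ·D_π·←P, where ←P(x,y) = π(y)·P(y,x)/π(x) is the reversed kernel; and (b) the vector φ := Hᵀ·π has all entries strictly positive and satisfies P̂·φ = φ. -/
open Matrix Finset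

/-- The reversed kernel `←P(x,y) = π(y)·P(y,x)/π(x)`. -/
noncomputable def revKernel {I : Type*} (P : Matrix I I ℝ) (π : I → ℝ) : Matrix I I ℝ :=
  Matrix.of fun x y => π y * P y x / π x

/-! Writing `D = D_π`, the reversed kernel is `←P = D⁻¹ Pᵀ D`, i.e. `D ←P = Pᵀ D`. Transposing the
duality `H P̂ᵀ = P H` gives `P̂ Hᵀ = Hᵀ Pᵀ`; multiplying on the right by `D` gives (i), and applying
it to `π`, which is fixed by `Pᵀ`, gives `P̂ φ = φ`. -/

section

variable {I J : Type*} [Fintype I]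

theorem diagonal_mul_revKernel [DecidableEq I] (P : Matrix I I ℝ) {π : I → ℝ}
    (hπ : ∀ x, π x ≠ 0) : diagonal π * revKernel P π = Pᵀ * diagonal π := by
  ext x y
  simp only [diagonal_mul, mul_diagonal, revKernel, of_apply, transpose_apply]
  field_simp [hπ x]

theorem mul_transpose_eq_transpose_mul_of_dual {H : Matrix I J ℝ} {P : Matrix I I ℝ}
    [Fintype J] {Phat : Matrix J J ℝ} (hdual : H * Phatᵀ = P * H) : Phat * Hᵀ = Hᵀ * Pᵀ := by
  rw [← transpose_mul, ← hdual, transpose_mul, transpose_transpose]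

theorem transpose_mulVec_pos {H : Matrix I J ℝ} {π : I → ℝ} (hH0 : ∀ x y, 0 ≤ H x y)
    (hHcol : ∀ y, ∃ x, 0 < H x y) (hπ : ∀ x, 0 < π x) (y : J) : 0 < (Hᵀ *ᵥ π) y := by
  obtain ⟨x, hx⟩ := hHcol y
  exact Finset.sum_pos' (fun z _ => mul_nonneg (hH0 z y) (hπ z).le)
    ⟨x, Finset.mem_univ x, mul_pos hx (hπ x)⟩

end

theorem stmt0_general {I J : Type*} [Fintype I] [Fintype J] [DecidableEq I]
    (P : Matrix I I ℝ) (π : I → ℝ) (H : Matrix I J ℝ) (Phat : Matrix J J ℝ)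
    (hπpos : ∀ x, 0 < π x)
    (hπP : ∀ y, ∑ x, π x * P x y = π y)
    (hH0 : ∀ x y, 0 ≤ H x y) (hHcol : ∀ y, ∃ x, 0 < H x y)
    (hdual : H * Phatᵀ = P * H) :
    Phat * Hᵀ * Matrix.diagonal π = Hᵀ * Matrix.diagonal π * revKernel P π ∧
    (∀ y, 0 < Hᵀ.mulVec π y) ∧
    Phat.mulVec (Hᵀ.mulVec π) = Hᵀ.mulVec π := by
  have hcomm := mul_transpose_eq_transpose_mul_of_dual hdual
  have hstat : π ᵥ* P = π := funext hπP
  refine ⟨?_, transpose_mulVec_pos hH0 hHcol hπpos, ?_⟩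
  · rw [Matrix.mul_assoc Hᵀ, diagonal_mul_revKernel P fun x => (hπpos x).ne', hcomm,
      Matrix.mul_assoc]
  · rw [mulVec_mulVec, hcomm, ← mulVec_mulVec, mulVec_transpose P, hstat]

/-- Theorem 1 (i)–(ii): duality `H·P̂ᵀ = P·H` implies
`P̂·Hᵀ·D_π = Hᵀ·D_π·←P`, and `φ = Hᵀ·π` is positive with `P̂·φ = φ`. -/
theorem stmt0 {I J : Type*} [Fintype I] [Fintype J] [DecidableEq I] [DecidableEq J]
    [Nonempty I] [Nonempty J]
    (P : Matrix I I ℝ) (π : I → ℝ) (H : Matrix I J ℝ) (Phat : Matrix J J ℝ)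
    (hP0 : ∀ x y, 0 ≤ P x y) (hP1 : ∀ x, ∑ y, P x y = 1)
    (hirr : ∀ x y, ∃ n ≥ 1, 0 < (P ^ n) x y)
    (hπpos : ∀ x, 0 < π x) (hπ1 : ∑ x, π x = 1)
    (hπP : ∀ y, ∑ x, π x * P x y = π y)
    (hH0 : ∀ x y, 0 ≤ H x y) (hHcol : ∀ y, ∃ x, 0 < H x y)
    (hPhat0 : ∀ x y, 0 ≤ Phat x y)
    (hdual : H * Phatᵀ = P * H) :
    Phat * Hᵀ * Matrix.diagonal π = Hᵀ * Matrix.diagonal π * revKernel P π ∧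
    (∀ y, 0 < Hᵀ.mulVec π y) ∧
    Phat.mulVec (Hᵀ.mulVec π) = Hᵀ.mulVec π :=
  stmt0_general P π H Phat hπpos hπP hH0 hHcol hdual
end

section
/- Let I and J be finite nonempty sets, let P be an irreducible stochastic matrix on I with stationary distribution π, let H be an entrywise nonnegative I×J matrix each of whose columns contains a strictly positive entry, and let P̂ be an entrywise nonnegative J×J matrix satisfying H·P̂ᵀ = P·H. Set φ := Hᵀ·π, Λ := D_φ⁻¹·Hᵀ·D_π (a J×I matrix), P̃ := D_φ⁻¹·P̂·D_φ, and K := H·D_φ⁻¹. Then P̃ and Λ are stochastic matrices, the intertwining relation P̃·Λ = Λ·←P holds, where ←P(x,y) = π(y)·P(y,x)/π(x), and the duality relation K·P̃ᵀ = P·K holds. -/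
open Matrix Finset

/-- Theorem 1 (iii): `P̃ = D_φ⁻¹·P̂·D_φ` and `Λ = D_φ⁻¹·Hᵀ·D_π` are stochastic,
`P̃·Λ = Λ·←P`, and `K·P̃ᵀ = P·K` with `K = H·D_φ⁻¹`. -/
theorem stmt1 {I J : Type*} [Fintype I] [Fintype J] [DecidableEq I] [DecidableEq J]
    [Nonempty I] [Nonempty J]
    (P : Matrix I I ℝ) (π : I → ℝ) (H : Matrix I J ℝ) (Phat : Matrix J J ℝ)
    (hP0 : ∀ x y, 0 ≤ P x y) (hP1 : ∀ x, ∑ y, P x y = 1)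
    (hirr : ∀ x y, ∃ n ≥ 1, 0 < (P ^ n) x y)
    (hπpos : ∀ x, 0 < π x) (hπ1 : ∑ x, π x = 1)
    (hπP : ∀ y, ∑ x, π x * P x y = π y)
    (hH0 : ∀ x y, 0 ≤ H x y) (hHcol : ∀ y, ∃ x, 0 < H x y)
    (hPhat0 : ∀ x y, 0 ≤ Phat x y)
    (hdual : H * Phatᵀ = P * H) :
    let φ : J → ℝ := Hᵀ.mulVec π
    let Λ : Matrix J I ℝ := Matrix.diagonal (fun y => (φ y)⁻¹) * Hᵀ * Matrix.diagonal π
    let Ptil : Matrix J J ℝ := Matrix.diagonal (fun y => (φ y)⁻¹) * Phat * Matrix.diagonal φ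
    let K : Matrix I J ℝ := H * Matrix.diagonal (fun y => (φ y)⁻¹)
    ((∀ x y, 0 ≤ Ptil x y) ∧ (∀ x, ∑ y, Ptil x y = 1)) ∧
    ((∀ x y, 0 ≤ Λ x y) ∧ (∀ x, ∑ y, Λ x y = 1)) ∧
    Ptil * Λ = Λ * revKernel P π ∧
    K * Ptilᵀ = P * K := by
  intro φ Λ Ptil K
  have hφdef : ∀ y, φ y = ∑ x, H x y * π x := by
    intro y
    simp [φ, Matrix.mulVec, dotProduct, Matrix.transpose_apply]
  have hφpos : ∀ y, 0 < φ y := by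
    intro y
    obtain ⟨x₀, hx₀⟩ := hHcol y
    rw [hφdef]
    exact Finset.sum_pos' (fun x _ => mul_nonneg (hH0 x y) (hπpos x).le)
      ⟨x₀, Finset.mem_univ x₀, mul_pos hx₀ (hπpos x₀)⟩
  have hφne : ∀ y, φ y ≠ 0 := fun y => (hφpos y).ne'
  have hπne : ∀ x, π x ≠ 0 := fun x => (hπpos x).ne'
  -- entry formulas
  have hΛ : ∀ y x, Λ y x = (φ y)⁻¹ * H x y * π x := by
    intro y x
    simp [Λ, Matrix.diagonal_mul, Matrix.mul_diagonal, Matrix.transpose_apply, mul_assoc]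
  have hPtil : ∀ y z, Ptil y z = (φ y)⁻¹ * Phat y z * φ z := by
    intro y z
    simp [Ptil, Matrix.diagonal_mul, Matrix.mul_diagonal, mul_assoc]
  have hK : ∀ x y, K x y = H x y * (φ y)⁻¹ := by
    intro x y
    simp [K, Matrix.mul_diagonal]
  -- key consequence of duality, entrywise
  have hdual' : ∀ x y, ∑ z, H x z * Phat y z = ∑ w, P x w * H w y := by
    intro x y
    have := congrFun (congrFun hdual x) y
    simpa [Matrix.mul_apply, Matrix.transpose_apply] using this
  -- P̂ preserves φ
  have hPhatφ : ∀ y, ∑ z, Phat y z * φ z = φ y := by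
    intro y
    calc ∑ z, Phat y z * φ z = ∑ z, ∑ x, Phat y z * (H x z * π x) := by
          simp only [hφdef, Finset.mul_sum]
      _ = ∑ x, ∑ z, H x z * Phat y z * π x := by
          rw [Finset.sum_comm]; apply Finset.sum_congr rfl; intros; apply Finset.sum_congr rfl
          intros; ring
      _ = ∑ x, (∑ z, H x z * Phat y z) * π x := by
          simp [Finset.sum_mul]
      _ = ∑ x, (∑ w, P x w * H w y) * π x := by
          simp only [hdual']
      _ = ∑ x, ∑ w, P x w * H w y * π x := by simp [Finset.sum_mul]
      _ = ∑ w, ∑ x, π x * P x w * H w y := by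
          rw [Finset.sum_comm]; apply Finset.sum_congr rfl; intros
          apply Finset.sum_congr rfl; intros; ring
      _ = ∑ w, (∑ x, π x * P x w) * H w y := by simp [Finset.sum_mul]
      _ = ∑ w, π w * H w y := by simp only [hπP]
      _ = φ y := by rw [hφdef]; apply Finset.sum_congr rfl; intros; ring
  refine ⟨⟨?_, ?_⟩, ⟨?_, ?_⟩, ?_, ?_⟩
  · intro y z
    rw [hPtil]
    exact mul_nonneg (mul_nonneg (inv_nonneg.mpr (hφpos y).le) (hPhat0 y z)) (hφpos z).le
  · intro y
    simp only [hPtil, mul_assoc, ← Finset.mul_sum]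
    rw [hPhatφ, inv_mul_cancel₀ (hφne y)]
  · intro y x
    rw [hΛ]
    exact mul_nonneg (mul_nonneg (inv_nonneg.mpr (hφpos y).le) (hH0 x y)) (hπpos x).le
  · intro y
    simp only [hΛ, mul_assoc, ← Finset.mul_sum]
    rw [← hφdef y, inv_mul_cancel₀ (hφne y)]
  · -- intertwining
    ext y x
    rw [Matrix.mul_apply, Matrix.mul_apply]
    calc ∑ z, Ptil y z * Λ z x = ∑ z, (φ y)⁻¹ * π x * (H x z * Phat y z) := by
          apply Finset.sum_congr rfl; intro z _
          rw [hPtil, hΛ]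
          have hz : φ z * (φ z)⁻¹ = 1 := mul_inv_cancel₀ (hφne z)
          linear_combination ((φ y)⁻¹ * Phat y z * H x z * π x) * hz
      _ = (φ y)⁻¹ * π x * ∑ z, H x z * Phat y z := by rw [Finset.mul_sum]
      _ = (φ y)⁻¹ * π x * ∑ w, P x w * H w y := by rw [hdual']
      _ = ∑ w, Λ y w * revKernel P π w x := by
          rw [Finset.mul_sum]
          apply Finset.sum_congr rfl; intro w _
          rw [hΛ]
          simp only [revKernel, Matrix.of_apply]
          have hw : π w * (π w)⁻¹ = 1 := mul_inv_cancel₀ (hπne w)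
          linear_combination (-((φ y)⁻¹ * π x * P x w * H w y)) * hw
  · -- duality
    ext x y
    rw [Matrix.mul_apply, Matrix.mul_apply]
    calc ∑ z, K x z * Ptilᵀ z y = ∑ z, (φ y)⁻¹ * (H x z * Phat y z) := by
          apply Finset.sum_congr rfl; intro z _
          rw [Matrix.transpose_apply, hK, hPtil]
          have hz : φ z * (φ z)⁻¹ = 1 := mul_inv_cancel₀ (hφne z)
          linear_combination ((φ y)⁻¹ * H x z * Phat y z) * hz
      _ = (φ y)⁻¹ * ∑ z, H x z * Phat y z := by rw [Finset.mul_sum]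
      _ = (φ y)⁻¹ * ∑ w, P x w * H w y := by rw [hdual']
      _ = ∑ w, P x w * K w y := by
          rw [Finset.mul_sum]
          apply Finset.sum_congr rfl; intro w _
          rw [hK]
          ring
end

section
/- Let I and J be finite nonempty sets, let P be an irreducible stochastic matrix on I with stationary distribution π, let H be an entrywise nonnegative I×J matrix each of whose columns contains a strictly positive entry, and let P̂ be an entrywise nonnegative J×J matrix with H·P̂ᵀ = P·H, and suppose P̂ is substochastic. Set φ := Hᵀ·π and P̃ := D_φ⁻¹·P̂·D_φ. Then: (a) if P̂ is stochastic and irreducible, there exists a constant c > 0 such that φ(y) = c for all y ∈ J, and P̃ = P̂; (b) if P̂ is strictly substochastic, then P̂ is not irreducible. -/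
open Matrix Finset

lemma key_const {J : Type*} [Fintype J] [DecidableEq J] [Nonempty J]
    (Q : Matrix J J ℝ) (φ : J → ℝ)
    (h0 : ∀ x y, 0 ≤ Q x y) (hsub : ∀ x, ∑ y, Q x y ≤ 1)
    (hfix : ∀ x, ∑ y, Q x y * φ y = φ x)
    (hpos : ∀ y, 0 < φ y)
    (hirr : ∀ x y, ∃ n ≥ 1, 0 < (Q ^ n) x y) :
    ∃ c > 0, ∀ y, φ y = c := by
  have hpow0 : ∀ n x y, 0 ≤ (Q ^ n) x y := by
    intro n
    induction n with
    | zero =>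
      intro x y
      rw [pow_zero]
      by_cases h : x = y <;> simp [Matrix.one_apply, h]
    | succ n ih =>
      intro x y
      rw [pow_succ, Matrix.mul_apply]
      exact Finset.sum_nonneg fun z _ => mul_nonneg (ih x z) (h0 z y)
  have hpows : ∀ n x, ∑ y, (Q ^ n) x y ≤ 1 := by
    intro n
    induction n with
    | zero => intro x; simp [Matrix.one_apply]
    | succ n ih =>
      intro x
      have : ∑ y, (Q ^ (n+1)) x y = ∑ z, (Q ^ n) x z * ∑ y, Q z y := by
        simp only [pow_succ, Matrix.mul_apply, Finset.mul_sum]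
        exact Finset.sum_comm
      rw [this]
      calc ∑ z, (Q ^ n) x z * ∑ y, Q z y ≤ ∑ z, (Q ^ n) x z * 1 :=
            Finset.sum_le_sum fun z _ => mul_le_mul_of_nonneg_left (hsub z) (hpow0 n x z)
        _ = ∑ z, (Q ^ n) x z := by simp
        _ ≤ 1 := ih x
  have hfixn : ∀ n x, ∑ y, (Q ^ n) x y * φ y = φ x := by
    intro n
    induction n with
    | zero => intro x; simp [Matrix.one_apply]
    | succ n ih =>
      intro x
      have : ∑ y, (Q ^ (n+1)) x y * φ y = ∑ z, (Q ^ n) x z * ∑ y, Q z y * φ y := by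
        simp only [pow_succ, Matrix.mul_apply, Finset.sum_mul, Finset.mul_sum, mul_assoc]
        exact Finset.sum_comm
      rw [this]
      simp only [hfix]
      exact ih x
  obtain ⟨z₀, _, hz₀⟩ := Finset.exists_max_image Finset.univ φ Finset.univ_nonempty
  refine ⟨φ z₀, hpos z₀, fun x => ?_⟩
  obtain ⟨n, _, hQ⟩ := hirr z₀ x
  have hterm : ∀ y ∈ Finset.univ, 0 ≤ (Q ^ n) z₀ y * (φ z₀ - φ y) :=
    fun y _ => mul_nonneg (hpow0 n z₀ y) (sub_nonneg.2 (hz₀ y (Finset.mem_univ y)))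
  have hsumeq : ∑ y, (Q ^ n) z₀ y * (φ z₀ - φ y)
      = (∑ y, (Q ^ n) z₀ y) * φ z₀ - φ z₀ := by
    rw [Finset.sum_mul, ← hfixn n z₀, ← Finset.sum_sub_distrib]
    congr 1; ext y; ring
  have hle : ∑ y, (Q ^ n) z₀ y * (φ z₀ - φ y) ≤ 0 := by
    rw [hsumeq]
    nlinarith [hpows n z₀, hpos z₀]
  have hzero : ∑ y, (Q ^ n) z₀ y * (φ z₀ - φ y) = 0 :=
    le_antisymm hle (Finset.sum_nonneg hterm)
  have := (Finset.sum_eq_zero_iff_of_nonneg hterm).1 hzero x (Finset.mem_univ x)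
  rcases mul_eq_zero.1 this with h | h
  · exact absurd h hQ.ne'
  · linarith [sub_eq_zero.1 h]

/-- Theorem 1 (iv1)–(iv2): under duality with a substochastic `P̂`:
(a) if `P̂` is stochastic and irreducible then `φ` is a positive constant and `P̃ = P̂`;
(b) if `P̂` is strictly substochastic then it is not irreducible. -/
theorem stmt2 {I J : Type*} [Fintype I] [Fintype J] [DecidableEq I] [DecidableEq J]
    [Nonempty I] [Nonempty J]
    (P : Matrix I I ℝ) (π : I → ℝ) (H : Matrix I J ℝ) (Phat : Matrix J J ℝ)
    (hP0 : ∀ x y, 0 ≤ P x y) (hP1 : ∀ x, ∑ y, P x y = 1)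
    (hirr : ∀ x y, ∃ n ≥ 1, 0 < (P ^ n) x y)
    (hπpos : ∀ x, 0 < π x) (hπ1 : ∑ x, π x = 1)
    (hπP : ∀ y, ∑ x, π x * P x y = π y)
    (hH0 : ∀ x y, 0 ≤ H x y) (hHcol : ∀ y, ∃ x, 0 < H x y)
    (hPhat0 : ∀ x y, 0 ≤ Phat x y)
    (hPhatsub : ∀ x, ∑ y, Phat x y ≤ 1)
    (hdual : H * Phatᵀ = P * H) :
    let φ : J → ℝ := Hᵀ.mulVec π
    let Ptil : Matrix J J ℝ := Matrix.diagonal (fun y => (φ y)⁻¹) * Phat * Matrix.diagonal φ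
    ((∀ x, ∑ y, Phat x y = 1) → (∀ x y, ∃ n ≥ 1, 0 < (Phat ^ n) x y) →
      ∃ c > 0, (∀ y, φ y = c) ∧ Ptil = Phat) ∧
    ((∃ x, ∑ y, Phat x y < 1) → ¬ (∀ x y, ∃ n ≥ 1, 0 < (Phat ^ n) x y)) := by
  intro φ Ptil
  have hφ : ∀ y, φ y = ∑ x, π x * H x y := by
    intro y
    simp [φ, Matrix.mulVec, dotProduct, Matrix.transpose_apply, mul_comm]
  have hφpos : ∀ y, 0 < φ y := by
    intro y
    rw [hφ]
    obtain ⟨x, hx⟩ := hHcol y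
    exact Finset.sum_pos' (fun i _ => mul_nonneg (hπpos i).le (hH0 i y))
      ⟨x, Finset.mem_univ x, mul_pos (hπpos x) hx⟩
  have hfix : ∀ z, ∑ y, Phat z y * φ y = φ z := by
    intro z
    simp only [hφ]
    calc ∑ y, Phat z y * ∑ x, π x * H x y
        = ∑ x, π x * ∑ y, H x y * Phat z y := by
          simp only [Finset.mul_sum]
          rw [Finset.sum_comm]
          congr 1; ext x; congr 1; ext y; ring
      _ = ∑ x, π x * (H * Phatᵀ) x z := by
          simp only [Matrix.mul_apply, Matrix.transpose_apply]
      _ = ∑ x, π x * (P * H) x z := by rw [hdual]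
      _ = ∑ w, (∑ x, π x * P x w) * H w z := by
          simp only [Matrix.mul_apply, Finset.mul_sum, Finset.sum_mul]
          rw [Finset.sum_comm]
          congr 1; ext w; congr 1; ext x; ring
      _ = ∑ w, π w * H w z := by simp only [hπP]
  constructor
  · intro _ hPirr
    obtain ⟨c, hc, hconst⟩ := key_const Phat φ hPhat0 hPhatsub hfix hφpos hPirr
    refine ⟨c, hc, hconst, ?_⟩
    ext x y
    simp only [Ptil, Matrix.mul_diagonal, Matrix.diagonal_mul, hconst]
    field_simp
  · rintro ⟨x₀, hx₀⟩ hPirr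
    obtain ⟨c, hc, hconst⟩ := key_const Phat φ hPhat0 hPhatsub hfix hφpos hPirr
    have := hfix x₀
    simp only [hconst, ← Finset.sum_mul] at this
    nlinarith
end

section
/- Let I and J be finite nonempty sets, let P be an irreducible stochastic matrix on I with stationary distribution π, let H be an entrywise nonnegative I×J matrix each of whose columns contains a strictly positive entry, and let P̂ be an entrywise nonnegative J×J matrix with H·P̂ᵀ = P·H. Set φ := Hᵀ·π, Λ := D_φ⁻¹·Hᵀ·D_π, and P̃ := D_φ⁻¹·P̂·D_φ. If â ∈ J is an absorbing state of P̂, then â is an absorbing state of P̃ and the row of Λ indexed by â equals π, i.e. Λ(â,y) = π(y) for all y ∈ I. Moreover, for every y ∈ J, y is an absorbing state of P̂ if and only if y is an absorbing state of P̃. -/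
open Matrix Finset

/-- Theorem 1 (v): if `â` is absorbing for `P̂` then it is absorbing for `P̃`,
the `â`-row of `Λ` equals `π`, and `P̂` and `P̃` have the same absorbing states. -/
theorem stmt3 {I J : Type*} [Fintype I] [Fintype J] [DecidableEq I] [DecidableEq J]
    [Nonempty I] [Nonempty J]
    (P : Matrix I I ℝ) (π : I → ℝ) (H : Matrix I J ℝ) (Phat : Matrix J J ℝ)
    (hP0 : ∀ x y, 0 ≤ P x y) (hP1 : ∀ x, ∑ y, P x y = 1)
    (hirr : ∀ x y, ∃ n ≥ 1, 0 < (P ^ n) x y)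
    (hπpos : ∀ x, 0 < π x) (hπ1 : ∑ x, π x = 1)
    (hπP : ∀ y, ∑ x, π x * P x y = π y)
    (hH0 : ∀ x y, 0 ≤ H x y) (hHcol : ∀ y, ∃ x, 0 < H x y)
    (hPhat0 : ∀ x y, 0 ≤ Phat x y)
    (hdual : H * Phatᵀ = P * H)
    (ahat : J) (habs : ∀ y, Phat ahat y = if y = ahat then 1 else 0) :
    let φ : J → ℝ := Hᵀ.mulVec π
    let Λ : Matrix J I ℝ := Matrix.diagonal (fun y => (φ y)⁻¹) * Hᵀ * Matrix.diagonal π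
    let Ptil : Matrix J J ℝ := Matrix.diagonal (fun y => (φ y)⁻¹) * Phat * Matrix.diagonal φ
    (∀ y, Ptil ahat y = if y = ahat then 1 else 0) ∧
    (∀ y, Λ ahat y = π y) ∧
    (∀ a : J, (∀ y, Phat a y = if y = a then 1 else 0) ↔
      (∀ y, Ptil a y = if y = a then 1 else 0)) := by
  intro φ Λ Ptil
  have hφ : ∀ j, φ j = ∑ x, H x j * π x := by
    intro j
    simp [φ, Matrix.mulVec, dotProduct, Matrix.transpose_apply]
  have hφpos : ∀ j, 0 < φ j := by
    intro j
    rw [hφ]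
    obtain ⟨x, hx⟩ := hHcol j
    exact Finset.sum_pos' (fun i _ => mul_nonneg (hH0 i j) (hπpos i).le)
      ⟨x, Finset.mem_univ x, mul_pos hx (hπpos x)⟩
  have hPtil : ∀ a y, Ptil a y = (φ a)⁻¹ * Phat a y * φ y := by
    intro a y
    simp [Ptil, Matrix.mul_diagonal, Matrix.diagonal_mul]
  -- part 3
  have key : ∀ a : J, (∀ y, Phat a y = if y = a then 1 else 0) ↔
      (∀ y, Ptil a y = if y = a then 1 else 0) := by
    intro a
    constructor
    · intro h y
      rw [hPtil, h y]
      by_cases hy : y = a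
      · subst hy
        simp [(hφpos y).ne']
      · simp [hy]
    · intro h y
      have hphat : Phat a y = φ a * Ptil a y * (φ y)⁻¹ := by
        have ha := (hφpos a).ne'
        have hyne := (hφpos y).ne'
        rw [hPtil]
        field_simp
      rw [hphat, h y]
      by_cases hy : y = a
      · subst hy
        simp [(hφpos y).ne']
      · simp [hy]
  -- harmonic function h = H·e_ahat
  set hf : I → ℝ := fun x => H x ahat with hhf
  have hharm : ∀ x, ∑ z, P x z * hf z = hf x := by
    intro x
    have := congrFun (congrFun hdual x) ahat
    simp only [Matrix.mul_apply, Matrix.transpose_apply, habs] at this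
    simp only [mul_ite, mul_one, mul_zero, Finset.sum_ite_eq', Finset.mem_univ,
      if_true] at this
    exact this.symm
  have hPn0 : ∀ n, 1 ≤ n → ∀ x y, 0 ≤ (P ^ n) x y := by
    intro n hn
    induction n with
    | zero => omega
    | succ m ih =>
      intro x y
      rcases Nat.eq_or_lt_of_le hn with h1 | h1
      · have : m = 0 := by omega
        subst this
        simpa using hP0 x y
      · have hm : 1 ≤ m := by omega
        rw [pow_succ, Matrix.mul_apply]
        exact Finset.sum_nonneg fun z _ => mul_nonneg (ih hm x z) (hP0 z y)
  have hPn1 : ∀ n, 1 ≤ n → ∀ x, ∑ y, (P ^ n) x y = 1 := by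
    intro n hn
    induction n with
    | zero => omega
    | succ m ih =>
      intro x
      rcases Nat.eq_or_lt_of_le hn with h1 | h1
      · have : m = 0 := by omega
        subst this
        simpa using hP1 x
      · have hm : 1 ≤ m := by omega
        rw [pow_succ]
        calc ∑ y, (P ^ m * P) x y = ∑ y, ∑ z, (P ^ m) x z * P z y := by
              simp [Matrix.mul_apply]
          _ = ∑ z, (P ^ m) x z * ∑ y, P z y := by
              rw [Finset.sum_comm]; simp [Finset.mul_sum]
          _ = 1 := by simp [hP1, ih hm x]
  have hPnharm : ∀ n, 1 ≤ n → ∀ x, ∑ z, (P ^ n) x z * hf z = hf x := by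
    intro n hn
    induction n with
    | zero => omega
    | succ m ih =>
      intro x
      rcases Nat.eq_or_lt_of_le hn with h1 | h1
      · have : m = 0 := by omega
        subst this
        simpa using hharm x
      · have hm : 1 ≤ m := by omega
        rw [pow_succ]
        calc ∑ z, (P ^ m * P) x z * hf z
            = ∑ z, ∑ w, (P ^ m) x w * P w z * hf z := by
              simp [Matrix.mul_apply, Finset.sum_mul]
          _ = ∑ w, (P ^ m) x w * ∑ z, P w z * hf z := by
              rw [Finset.sum_comm]
              simp [Finset.mul_sum, mul_assoc]
          _ = ∑ w, (P ^ m) x w * hf w := by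
              simp only [hharm]
          _ = hf x := ih hm x
  -- max principle: hf is constant
  obtain ⟨x0, -, hx0⟩ := Finset.exists_max_image (Finset.univ : Finset I) hf
    Finset.univ_nonempty
  have hconst : ∀ y, hf y = hf x0 := by
    intro y
    obtain ⟨n, hn, hpos⟩ := hirr x0 y
    have hsum0 : ∑ z, (P ^ n) x0 z * (hf x0 - hf z) = 0 := by
      have hsplit : ∑ z, (P ^ n) x0 z * (hf x0 - hf z)
          = (∑ z, (P ^ n) x0 z * hf x0) - ∑ z, (P ^ n) x0 z * hf z := by
        rw [← Finset.sum_sub_distrib]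
        apply Finset.sum_congr rfl
        intro z _
        ring
      rw [hsplit, hPnharm n hn x0, ← Finset.sum_mul, hPn1 n hn x0, one_mul, sub_self]
    have hterm : ∀ z ∈ Finset.univ, 0 ≤ (P ^ n) x0 z * (hf x0 - hf z) := by
      intro z _
      exact mul_nonneg (hPn0 n hn x0 z) (sub_nonneg.2 (hx0 z (Finset.mem_univ z)))
    have := (Finset.sum_eq_zero_iff_of_nonneg hterm).1 hsum0 y (Finset.mem_univ y)
    have h2 : hf x0 - hf y = 0 := by
      by_contra hne
      exact hne (by
        have := mul_eq_zero.1 this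
        rcases this with h | h
        · exact absurd h hpos.ne'
        · exact h)
    linarith
  have hφa : φ ahat = hf x0 := by
    rw [hφ]
    calc ∑ x, H x ahat * π x = ∑ x, hf x0 * π x := by
          apply Finset.sum_congr rfl
          intro x _
          rw [show H x ahat = hf x from rfl, hconst x]
      _ = hf x0 := by rw [← Finset.mul_sum, hπ1, mul_one]
  have hΛ : ∀ y, Λ ahat y = π y := by
    intro y
    have : Λ ahat y = (φ ahat)⁻¹ * H y ahat * π y := by
      simp [Λ, Matrix.mul_diagonal, Matrix.diagonal_mul]
    rw [this, show H y ahat = hf y from rfl, hconst y, hφa]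
    have hne : hf x0 ≠ 0 := by rw [← hφa]; exact (hφpos ahat).ne'
    field_simp
  exact ⟨(key ahat).1 habs, hΛ, key⟩
end

section
/- Let I be a finite nonempty set, let P be an irreducible stochastic matrix on I with stationary distribution π, let H be an entrywise nonnegative invertible I×I matrix, and let P̂ be an entrywise nonnegative I×I matrix with H·P̂ᵀ = P·H. Set φ := Hᵀ·π, Λ := D_φ⁻¹·Hᵀ·D_π, and P̃ := D_φ⁻¹·P̂·D_φ, and let ←P(x,y) = π(y)·P(y,x)/π(x). Then P̂ = Hᵀ·D_π·←P·D_π⁻¹·(Hᵀ)⁻¹, Λ is invertible with P̃ = Λ·←P·Λ⁻¹, and the characteristic polynomials of P, P̂ and P̃ all coincide. -/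
/-!
Transposing `H P̂ᵀ = P H` gives `P̂ Hᵀ = Hᵀ Pᵀ`, and `Pᵀ = D_π ←P D_π⁻¹`. Hence `P̂` is conjugate
to `←P` by `Hᵀ D_π` and `P̃` by `Λ = D_φ⁻¹ Hᵀ D_π`, while `P` has the charpoly of `Pᵀ`.
`Λ` is invertible because `φ > 0`: a nonsingular nonnegative `H` has a positive entry in
every column.
-/

open Matrix

namespace Matrix

variable {n : Type*} [Fintype n] [DecidableEq n]

theorem inv_diagonal_of_ne_zero {K : Type*} [Field K] {v : n → K} (hv : ∀ i, v i ≠ 0) :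
    (diagonal v)⁻¹ = diagonal fun i => (v i)⁻¹ :=
  inv_eq_left_inv <| by simp [diagonal_mul_diagonal, hv]

theorem isUnit_det_diagonal_of_ne_zero {K : Type*} [Field K] {v : n → K} (hv : ∀ i, v i ≠ 0) :
    IsUnit (diagonal v).det := by
  simpa [det_diagonal, Finset.prod_ne_zero_iff] using hv

theorem charpoly_conj_of_isUnit_det {R : Type*} [CommRing R] {A : Matrix n n R}
    (hA : IsUnit A.det) (B : Matrix n n R) : (A * B * A⁻¹).charpoly = B.charpoly := by
  rw [charpoly_mul_comm, ← mul_assoc, nonsing_inv_mul _ hA, one_mul]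

theorem mul_conj_mul {R : Type*} [CommRing R] (D A B : Matrix n n R) :
    D * (A * B * A⁻¹) * D⁻¹ = (D * A) * B * (D * A)⁻¹ := by
  simp only [Matrix.mul_inv_rev, mul_assoc]

theorem mulVec_transpose_pos {R : Type*} [CommRing R] [LinearOrder R] [IsStrictOrderedRing R]
    {H : Matrix n n R} (hH : ∀ x y, 0 ≤ H x y) (hdet : H.det ≠ 0) {v : n → R}
    (hv : ∀ x, 0 < v x) (y : n) : 0 < (Hᵀ *ᵥ v) y := by
  obtain ⟨x, hx⟩ : ∃ x, H x y ≠ 0 := by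
    by_contra! h
    exact hdet (det_eq_zero_of_column_eq_zero y h)
  simp only [mulVec, dotProduct, transpose_apply]
  exact Finset.sum_pos' (fun i _ => mul_nonneg (hH i y) (hv i).le)
    ⟨x, Finset.mem_univ x, mul_pos ((hH x y).lt_of_ne' hx) (hv x)⟩

end Matrix

theorem diagonal_mul_revKernel_mul_inv {I : Type*} [Fintype I] [DecidableEq I]
    (P : Matrix I I ℝ) {π : I → ℝ} (hπ : ∀ x, π x ≠ 0) :
    diagonal π * revKernel P π * (diagonal π)⁻¹ = Pᵀ := by
  ext x y
  simp only [revKernel, inv_diagonal_of_ne_zero hπ, mul_diagonal, diagonal_mul, of_apply,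
    transpose_apply]
  rw [mul_div_cancel₀ _ (hπ x), mul_comm, inv_mul_cancel_left₀ (hπ y)]

theorem stmt4_general {I : Type*} [Fintype I] [DecidableEq I]
    (P : Matrix I I ℝ) (π : I → ℝ) (H : Matrix I I ℝ) (Phat : Matrix I I ℝ)
    (hπpos : ∀ x, 0 < π x)
    (hH0 : ∀ x y, 0 ≤ H x y) (hHunit : IsUnit H.det)
    (hdual : H * Phatᵀ = P * H) :
    let φ : I → ℝ := Hᵀ.mulVec π
    let Λ : Matrix I I ℝ := Matrix.diagonal (fun y => (φ y)⁻¹) * Hᵀ * Matrix.diagonal π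
    let Ptil : Matrix I I ℝ := Matrix.diagonal (fun y => (φ y)⁻¹) * Phat * Matrix.diagonal φ
    Phat = Hᵀ * Matrix.diagonal π * revKernel P π *
      Matrix.diagonal (fun x => (π x)⁻¹) * (Hᵀ)⁻¹ ∧
    IsUnit Λ.det ∧ Ptil = Λ * revKernel P π * Λ⁻¹ ∧
    P.charpoly = Phat.charpoly ∧ Phat.charpoly = Ptil.charpoly := by
  intro φ Λ Ptil
  have hπ : ∀ x, π x ≠ 0 := fun x => (hπpos x).ne'
  have hφ : ∀ y, φ y ≠ 0 := fun y => (mulVec_transpose_pos hH0 hHunit.ne_zero hπpos y).ne'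
  have hφinv : ∀ y, (φ y)⁻¹ ≠ 0 := fun y => inv_ne_zero (hφ y)
  have hHT : IsUnit Hᵀ.det := by rwa [det_transpose]
  have hA : IsUnit (Hᵀ * diagonal π).det := by
    rw [det_mul]; exact hHT.mul (isUnit_det_diagonal_of_ne_zero hπ)
  have hΛ : IsUnit Λ.det := by
    rw [show Λ = _ * (Hᵀ * diagonal π) from mul_assoc _ _ _, det_mul]
    exact (isUnit_det_diagonal_of_ne_zero hφinv).mul hA
  have hPhat : Phat = (Hᵀ * diagonal π) * revKernel P π * (Hᵀ * diagonal π)⁻¹ := by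
    have hdualT : Phat * Hᵀ = Hᵀ * Pᵀ := by simpa using congrArg transpose hdual
    rw [Matrix.mul_inv_rev, ← mul_assoc, mul_assoc Hᵀ, mul_assoc Hᵀ,
      diagonal_mul_revKernel_mul_inv P hπ, ← hdualT, mul_nonsing_inv_cancel_right _ _ hHT]
  have hPtil : Ptil = Λ * revKernel P π * Λ⁻¹ := by
    have hDφ : diagonal φ = (diagonal fun y => (φ y)⁻¹)⁻¹ := by
      simp only [inv_diagonal_of_ne_zero hφinv, inv_inv]
    simp only [Ptil, Λ, hDφ, mul_assoc (diagonal _) Hᵀ]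
    rw [hPhat, mul_conj_mul]
  refine ⟨?_, hΛ, hPtil, ?_, ?_⟩
  · rw [← inv_diagonal_of_ne_zero hπ, hPhat, Matrix.mul_inv_rev]; simp only [mul_assoc]
  · rw [hPhat, charpoly_conj_of_isUnit_det hA, ← charpoly_transpose,
      ← diagonal_mul_revKernel_mul_inv P hπ,
      charpoly_conj_of_isUnit_det (isUnit_det_diagonal_of_ne_zero hπ)]
  · rw [hPtil, hPhat, charpoly_conj_of_isUnit_det hA, charpoly_conj_of_isUnit_det hΛ]

/-- Theorem 1 (vi): in the finite nonsingular case,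
`P̂ = Hᵀ·D_π·←P·D_π⁻¹·(Hᵀ)⁻¹`, `Λ` is invertible with `P̃ = Λ·←P·Λ⁻¹`,
and `P`, `P̂`, `P̃` have the same characteristic polynomial. -/
theorem stmt4 {I : Type*} [Fintype I] [DecidableEq I] [Nonempty I]
    (P : Matrix I I ℝ) (π : I → ℝ) (H : Matrix I I ℝ) (Phat : Matrix I I ℝ)
    (hP0 : ∀ x y, 0 ≤ P x y) (hP1 : ∀ x, ∑ y, P x y = 1)
    (hirr : ∀ x y, ∃ n ≥ 1, 0 < (P ^ n) x y)
    (hπpos : ∀ x, 0 < π x) (hπ1 : ∑ x, π x = 1)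
    (hπP : ∀ y, ∑ x, π x * P x y = π y)
    (hH0 : ∀ x y, 0 ≤ H x y) (hHunit : IsUnit H.det)
    (hPhat0 : ∀ x y, 0 ≤ Phat x y)
    (hdual : H * Phatᵀ = P * H) :
    let φ : I → ℝ := Hᵀ.mulVec π
    let Λ : Matrix I I ℝ := Matrix.diagonal (fun y => (φ y)⁻¹) * Hᵀ * Matrix.diagonal π
    let Ptil : Matrix I I ℝ := Matrix.diagonal (fun y => (φ y)⁻¹) * Phat * Matrix.diagonal φ
    Phat = Hᵀ * Matrix.diagonal π * revKernel P π *
      Matrix.diagonal (fun x => (π x)⁻¹) * (Hᵀ)⁻¹ ∧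
    IsUnit Λ.det ∧ Ptil = Λ * revKernel P π * Λ⁻¹ ∧
    P.charpoly = Phat.charpoly ∧ Phat.charpoly = Ptil.charpoly :=
  stmt4_general P π H Phat hπpos hH0 hHunit hdual
end

section
/- Let I and Ĩ be finite nonempty sets, let P be an irreducible stochastic matrix on I with stationary distribution π, let Λ be a stochastic Ĩ×I matrix, and let P̃ be an entrywise nonnegative Ĩ×Ĩ matrix satisfying the intertwining relation P̃·Λ = Λ·P. If ã ∈ Ĩ is an absorbing state of P̃, then the row of Λ indexed by ã equals π, i.e. Λ(ã,y) = π(y) for all y ∈ I. -/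
open Matrix Finset

/-- Proposition prop0: if `P̃·Λ = Λ·P` with `Λ` stochastic, `P` irreducible positive
recurrent stochastic with stationary distribution `π`, and `ã` is absorbing for `P̃`,
then the `ã`-row of `Λ` equals `π`. -/
theorem stmt5 {I J : Type*} [Fintype I] [Fintype J] [DecidableEq I] [DecidableEq J]
    [Nonempty I] [Nonempty J]
    (P : Matrix I I ℝ) (π : I → ℝ) (Λ : Matrix J I ℝ) (Ptil : Matrix J J ℝ)
    (hP0 : ∀ x y, 0 ≤ P x y) (hP1 : ∀ x, ∑ y, P x y = 1)
    (hirr : ∀ x y, ∃ n ≥ 1, 0 < (P ^ n) x y)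
    (hπpos : ∀ x, 0 < π x) (hπ1 : ∑ x, π x = 1)
    (hπP : ∀ y, ∑ x, π x * P x y = π y)
    (hΛ0 : ∀ x y, 0 ≤ Λ x y) (hΛ1 : ∀ x, ∑ y, Λ x y = 1)
    (hPtil0 : ∀ x y, 0 ≤ Ptil x y)
    (hint : Ptil * Λ = Λ * P)
    (atil : J) (habs : ∀ y, Ptil atil y = if y = atil then 1 else 0) :
    ∀ y, Λ atil y = π y := by
  set μ : I → ℝ := Λ atil with hμdef
  -- μ is P-invariant
  have hμP : ∀ y, ∑ x, μ x * P x y = μ y := by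
    intro y
    have h1 := congrFun (congrFun hint atil) y
    rw [Matrix.mul_apply, Matrix.mul_apply] at h1
    simp only [habs, ite_mul, one_mul, zero_mul, Finset.sum_ite_eq', Finset.mem_univ,
      if_true] at h1
    exact h1.symm
  -- minimizer of μ/π
  obtain ⟨x0, -, hx0⟩ := Finset.exists_min_image Finset.univ (fun x => μ x / π x)
    Finset.univ_nonempty
  set c : ℝ := μ x0 / π x0 with hcdef
  set ν : I → ℝ := fun x => μ x - c * π x with hνdef
  have hν0 : ∀ x, 0 ≤ ν x := by
    intro x
    have h := hx0 x (Finset.mem_univ x)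
    have h2 : c * π x ≤ μ x := by
      have := (le_div_iff₀ (hπpos x)).mp h
      linarith
    simp only [hνdef]; linarith
  have hνx0 : ν x0 = 0 := by
    simp only [hνdef, hcdef]
    rw [div_mul_cancel₀ _ (hπpos x0).ne']
    ring
  have hνP : ∀ y, ∑ x, ν x * P x y = ν y := by
    intro y
    simp only [hνdef, sub_mul, Finset.sum_sub_distrib, mul_assoc]
    rw [← Finset.mul_sum, hμP, hπP]
  have hνPn : ∀ n y, ∑ x, ν x * (P ^ n) x y = ν y := by
    intro n
    induction n with
    | zero =>
      intro y
      simp [Matrix.one_apply, mul_ite, Finset.sum_ite_eq']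
    | succ n ih =>
      intro y
      calc ∑ x, ν x * (P ^ (n + 1)) x y
          = ∑ x, ∑ k, ν x * (P ^ n) x k * P k y := by
            simp [pow_succ, Matrix.mul_apply, Finset.mul_sum, mul_assoc]
        _ = ∑ k, (∑ x, ν x * (P ^ n) x k) * P k y := by
            rw [Finset.sum_comm]; simp [Finset.sum_mul]
        _ = ∑ k, ν k * P k y := by simp only [ih]
        _ = ν y := hνP y
  -- P^n entries are nonnegative
  have hPn0 : ∀ n x y, 0 ≤ (P ^ n) x y := by
    intro n
    induction n with
    | zero => intro x y; simp [Matrix.one_apply]; positivity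
    | succ n ih =>
      intro x y
      rw [pow_succ, Matrix.mul_apply]
      exact Finset.sum_nonneg fun k _ => mul_nonneg (ih x k) (hP0 k y)
  -- ν is identically 0
  have hνzero : ∀ x, ν x = 0 := by
    intro x1
    by_contra hne
    have hpos : 0 < ν x1 := lt_of_le_of_ne (hν0 x1) (Ne.symm hne)
    obtain ⟨n, -, hn⟩ := hirr x1 x0
    have hle : ν x1 * (P ^ n) x1 x0 ≤ ∑ x, ν x * (P ^ n) x x0 :=
      Finset.single_le_sum (fun x _ => mul_nonneg (hν0 x) (hPn0 n x x0))
        (Finset.mem_univ x1)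
    rw [hνPn n x0, hνx0] at hle
    nlinarith
  have hc : c = 1 := by
    have hsum : ∑ x, μ x = 1 := hΛ1 atil
    have : ∑ x, (μ x - c * π x) = 0 := by
      apply Finset.sum_eq_zero; intro x _; exact hνzero x
    rw [Finset.sum_sub_distrib, ← Finset.mul_sum, hπ1, hsum] at this
    linarith
  intro y
  have := hνzero y
  simp only [hνdef, hc, one_mul] at this
  linarith [this]
end

section
/- Let I be a finite nonempty set, let P be an irreducible stochastic matrix on I with stationary distribution π, let H be an entrywise nonnegative invertible I×I matrix, and let P̂ be the (unique) matrix satisfying H·P̂ᵀ = P·H. Suppose there exist â ∈ I and c > 0 such that the column of H indexed by â is constant equal to c, i.e. H(x,â) = c for all x ∈ I. Then: (a) â is an absorbing state of P̂, i.e. P̂(â,y) = 1 when y = â and 0 otherwise; and (b) with φ := Hᵀ·π and Λ := D_φ⁻¹·Hᵀ·D_π, the row of Λ indexed by â equals π: Λ(â,y) = π(y) for all y. -/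
open Matrix Finset

/-- Proposition propo1: if the column `â` of the nonsingular nonnegative dual function
`H` is constant equal to `c > 0`, then `â` is absorbing for `P̂` and the `â`-row of
`Λ = D_φ⁻¹·Hᵀ·D_π` equals `π`. -/
theorem stmt6 {I : Type*} [Fintype I] [DecidableEq I] [Nonempty I]
    (P : Matrix I I ℝ) (π : I → ℝ) (H : Matrix I I ℝ) (Phat : Matrix I I ℝ)
    (hP0 : ∀ x y, 0 ≤ P x y) (hP1 : ∀ x, ∑ y, P x y = 1)
    (hirr : ∀ x y, ∃ n ≥ 1, 0 < (P ^ n) x y)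
    (hπpos : ∀ x, 0 < π x) (hπ1 : ∑ x, π x = 1)
    (hπP : ∀ y, ∑ x, π x * P x y = π y)
    (hH0 : ∀ x y, 0 ≤ H x y) (hHunit : IsUnit H.det)
    (hdual : H * Phatᵀ = P * H)
    (ahat : I) (c : ℝ) (hc : 0 < c) (hcol : ∀ x, H x ahat = c) :
    let φ : I → ℝ := Hᵀ.mulVec π
    let Λ : Matrix I I ℝ := Matrix.diagonal (fun y => (φ y)⁻¹) * Hᵀ * Matrix.diagonal π
    (∀ y, Phat ahat y = if y = ahat then 1 else 0) ∧
    (∀ y, Λ ahat y = π y) := by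
  intro φ Λ
  have hinj : Function.Injective H.mulVec :=
    Matrix.mulVec_injective_iff_isUnit.2 ((Matrix.isUnit_iff_isUnit_det H).2 hHunit)
  have key : H.mulVec (fun z => Phat ahat z) = H.mulVec (fun z => if z = ahat then 1 else 0) := by
    funext x
    have h1 : H.mulVec (fun z => Phat ahat z) x = (H * Phatᵀ) x ahat := by
      simp [Matrix.mulVec, Matrix.mul_apply, dotProduct, Matrix.transpose_apply]
    have h2 : (P * H) x ahat = c := by
      simp only [Matrix.mul_apply, hcol]
      rw [← Finset.sum_mul, hP1, one_mul]
    rw [h1, hdual, h2]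
    simp [Matrix.mulVec, dotProduct, hcol]
  have habs : (fun z => Phat ahat z) = (fun z => if z = ahat then 1 else 0) := hinj key
  have hφa : φ ahat = c := by
    simp only [φ, Matrix.mulVec, dotProduct, Matrix.transpose_apply, hcol]
    rw [← Finset.mul_sum, hπ1, mul_one]
  refine ⟨fun y => congrFun habs y, fun y => ?_⟩
  have : Λ ahat y = (φ ahat)⁻¹ * H y ahat * π y := by
    simp [Λ, Matrix.mul_apply, Matrix.diagonal_apply, Matrix.transpose_apply,
      Finset.sum_ite_eq, Finset.sum_ite_eq']
  rw [this, hφa, hcol, inv_mul_cancel₀ hc.ne', one_mul]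
end

section
/- Let I be a finite set with n = |I| ≥ 1 elements, and let R be an entrywise nonnegative I×I matrix such that all row sums of R are at most 1, all column sums of R are at most 1, the matrix Id − R is invertible, and H := (Id − R)⁻¹ is entrywise nonnegative. For an entrywise nonnegative I×I matrix P, define P̂ by P̂ᵀ := (Id − R)·P·(Id − R)⁻¹. Then: (a) every row sum of P̂ is nonnegative, i.e. Σ_y P̂(x,y) ≥ 0 for every x; (b) if R·P ≤ P entrywise, then P̂ is entrywise nonnegative; (c) in particular, for the constant stochastic matrix P with all entries equal to 1/n, P̂ is entrywise nonnegative. -/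
open Matrix Finset

/-- Proposition propo3 (the potential case): let `R ≥ 0` have row and column sums `≤ 1`,
with `Id − R` invertible and `H = (Id − R)⁻¹ ≥ 0`. For nonnegative `P` define
`P̂ᵀ = (Id − R)·P·(Id − R)⁻¹`. Then (a) every row sum of `P̂` is nonnegative;
(b) if `R·P ≤ P` entrywise then `P̂ ≥ 0`; (c) for the constant stochastic matrix
with entries `1/n`, `P̂ ≥ 0`. -/
theorem stmt8 {I : Type*} [Fintype I] [DecidableEq I] [Nonempty I]
    (R : Matrix I I ℝ)
    (hR0 : ∀ i j, 0 ≤ R i j)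
    (hRrow : ∀ i, ∑ j, R i j ≤ 1)
    (hRcol : ∀ j, ∑ i, R i j ≤ 1)
    (hunit : IsUnit (1 - R).det)
    (hHnn : ∀ i j, 0 ≤ (1 - R)⁻¹ i j) :
    (∀ P : Matrix I I ℝ, (∀ i j, 0 ≤ P i j) →
      ∀ x, 0 ≤ ∑ y, (((1 - R) * P * (1 - R)⁻¹)ᵀ) x y) ∧
    (∀ P : Matrix I I ℝ, (∀ i j, 0 ≤ P i j) → (∀ i j, (R * P) i j ≤ P i j) →
      ∀ i j, 0 ≤ (((1 - R) * P * (1 - R)⁻¹)ᵀ) i j) ∧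
    (∀ i j, 0 ≤ (((1 - R) * (Matrix.of fun _ _ : I => ((Fintype.card I : ℝ))⁻¹) *
      (1 - R)⁻¹)ᵀ) i j) := by
  have hb : ∀ P : Matrix I I ℝ, (∀ i j, 0 ≤ P i j) → (∀ i j, (R * P) i j ≤ P i j) →
      ∀ i j, 0 ≤ (((1 - R) * P * (1 - R)⁻¹)ᵀ) i j := by
    intro P hP hRP i j
    simp only [Matrix.transpose_apply, Matrix.mul_apply]
    apply Finset.sum_nonneg
    intro k _
    apply mul_nonneg _ (hHnn k i)
    have : ∑ l, (1 - R) j l * P l k = P j k - (R * P) j k := by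
      simp [Matrix.sub_apply, Matrix.one_apply, sub_mul, Finset.sum_sub_distrib,
        Finset.sum_ite_eq, Matrix.mul_apply]
    rw [this]
    linarith [hRP j k]
  refine ⟨?_, hb, ?_⟩
  · intro P hP x
    simp only [Matrix.transpose_apply, Matrix.mul_apply]
    rw [Finset.sum_comm]
    apply Finset.sum_nonneg
    intro k _
    rw [← Finset.sum_mul]
    apply mul_nonneg _ (hHnn k x)
    rw [Finset.sum_comm]
    apply Finset.sum_nonneg
    intro l _
    rw [← Finset.sum_mul]
    apply mul_nonneg _ (hP l k)
    have : ∑ y, (1 - R) y l = 1 - ∑ y, R y l := by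
      simp [Matrix.sub_apply, Matrix.one_apply, Finset.sum_sub_distrib, Finset.sum_ite_eq]
    rw [this]
    linarith [hRcol l]
  · apply hb
    · intro i j; simp only [Matrix.of_apply]; positivity
    · intro i j
      simp only [Matrix.mul_apply, Matrix.of_apply]
      rw [← Finset.sum_mul]
      have h1 : (0:ℝ) ≤ ((Fintype.card I : ℝ))⁻¹ := by positivity
      nlinarith [hRrow i, Finset.sum_nonneg (fun k (_ : k ∈ Finset.univ) => hR0 i k)]
end

section
/- Let N ≥ 1 and I = {0,1,…,N}, let P be an irreducible stochastic matrix on I that is monotone, i.e. for every y ∈ I and every x < N one has Σ_{z≤y} P(x+1,z) ≤ Σ_{z≤y} P(x,z). Define the Siegmund dual P̂ by P̂(y,x) := Σ_{z≤y} P(x,z) − Σ_{z≤y} P(x+1,z) for x < N, and P̂(y,N) := Σ_{z≤y} P(N,z). Then: (a) H_S·P̂ᵀ = P·H_S, where H_S(x,y) = 1 if x ≤ y and 0 otherwise; (b) P̂ is entrywise nonnegative; (c) for every y, Σ_{x∈I} P̂(y,x) = Σ_{z≤y} P(0,z) ≤ 1, and Σ_{x∈I} P̂(0,x) = P(0,0)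 < 1, so P̂ is strictly substochastic and loses mass exactly through state 0; (d) N is an absorbing state of P̂, and it is the unique absorbing state of P̂. -/
/-!
Write `F x y = ∑ z ≤ y, P x z`. Row `y` of `P̂` lists the successive differences of
`x ↦ F x y` (with `F (N+1) y = 0`), so its tail sums telescope back to `F x y`; this one identity
yields the duality relation and the row sums. If `a` were absorbing for `P̂`, the identity would
give `F x a = 1` for every `x ≤ a`, i.e. `{x ≤ a}` would be a closed class of `P`, which
irreducibility forbids unless `a = N`; likewise `P 0 0 = 1` would make `{0}` closed.
-/

open Matrix Finset

noncomputable def siegmundDual (N : ℕ) (P : Matrix (Fin (N+1)) (Fin (N+1)) ℝ) :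
    Matrix (Fin (N+1)) (Fin (N+1)) ℝ :=
  Matrix.of fun y x =>
    if (x : ℕ) < N then
      (∑ z ∈ Finset.Iic y, P x z) - ∑ z ∈ Finset.Iic y, P (x + 1) z
    else ∑ z ∈ Finset.Iic y, P x z

section SiegmundKernel

variable {α R : Type*} [Fintype α] [LinearOrder α] [Semiring R]

def siegmundKernel (α R : Type*) [LE α] [DecidableLE α] [Zero R] [One R] : Matrix α α R :=
  Matrix.of fun x y => if x ≤ y then 1 else 0

theorem siegmundKernel_mul_apply [LocallyFiniteOrderTop α] (M : Matrix α α R) (x y : α) :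
    (siegmundKernel α R * M) x y = ∑ w ∈ Ici x, M w y := by
  simp [siegmundKernel, Matrix.mul_apply, ite_mul, Finset.sum_ite, Finset.filter_le_eq_Ici]

theorem mul_siegmundKernel_apply [LocallyFiniteOrderBot α] (M : Matrix α α R) (x y : α) :
    (M * siegmundKernel α R) x y = ∑ z ∈ Iic y, M x z := by
  simp [siegmundKernel, Matrix.mul_apply, mul_ite, Finset.sum_ite, Finset.filter_ge_eq_Iic]

end SiegmundKernel

theorem pow_apply_eq_zero_of_closed {ι R : Type*} [Fintype ι] [DecidableEq ι] [Semiring R]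
    {P : Matrix ι ι R} {s : Set ι} (hs : ∀ x ∈ s, ∀ z ∉ s, P x z = 0)
    (n : ℕ) {x z : ι} (hx : x ∈ s) (hz : z ∉ s) : (P ^ n) x z = 0 := by
  induction n generalizing z with
  | zero => exact one_apply_ne (ne_of_mem_of_not_mem hx hz)
  | succ n ih =>
    rw [pow_succ, mul_apply]
    refine sum_eq_zero fun w _ => ?_
    by_cases hw : w ∈ s
    · rw [hs w hw z hz, mul_zero]
    · rw [ih hw, zero_mul]

section Stochastic

variable {ι : Type*} [Fintype ι] {P : Matrix ι ι ℝ}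
  (hP0 : ∀ x y, 0 ≤ P x y) (hP1 : ∀ x, ∑ y, P x y = 1)
include hP0 hP1

theorem sum_apply_le_one (s : Finset ι) (x : ι) : ∑ z ∈ s, P x z ≤ 1 :=
  hP1 x ▸ sum_le_sum_of_subset_of_nonneg (subset_univ s) fun z _ _ => hP0 x z

variable [DecidableEq ι]

theorem apply_eq_zero_of_sum_eq_one {s : Finset ι} {x z : ι} (hs : ∑ w ∈ s, P x w = 1)
    (hz : z ∉ s) : P x z = 0 := by
  have hcompl : ∑ w ∈ sᶜ, P x w = 0 := by
    linarith [sum_add_sum_compl s (P x), hP1 x]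
  exact (sum_eq_zero_iff_of_nonneg fun w _ => hP0 x w).mp hcompl z (mem_compl.mpr hz)

variable (hirr : ∀ x y, ∃ n ≥ 1, 0 < (P ^ n) x y)
include hirr

theorem exists_sum_lt_one_of_irreducible {s : Finset ι} {a b : ι} (ha : a ∈ s) (hb : b ∉ s) :
    ∃ x ∈ s, ∑ z ∈ s, P x z < 1 := by
  by_contra! hclosed
  have hs : ∀ x ∈ (s : Set ι), ∀ z ∉ (s : Set ι), P x z = 0 := fun x hx z hz =>
    apply_eq_zero_of_sum_eq_one hP0 hP1
      ((sum_apply_le_one hP0 hP1 s x).antisymm (hclosed x hx)) hz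
  obtain ⟨n, -, hpos⟩ := hirr a b
  exact hpos.ne' (pow_apply_eq_zero_of_closed hs n ha hb)

theorem apply_self_lt_one_of_irreducible {a b : ι} (hab : a ≠ b) : P a a < 1 := by
  obtain ⟨x, hx, hlt⟩ := exists_sum_lt_one_of_irreducible hP0 hP1 hirr
    (mem_singleton_self a) (by simpa using hab.symm)
  rw [mem_singleton] at hx
  simpa [hx] using hlt

end Stochastic

section SiegmundDual

variable {N : ℕ} {P : Matrix (Fin (N+1)) (Fin (N+1)) ℝ}

theorem Fin.Ioi_castSucc {n : ℕ} (i : Fin n) : Ioi i.castSucc = Ici i.succ := by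
  ext j; simp [Fin.castSucc_lt_iff_succ_le]

theorem sum_Ici_siegmundDual (y x : Fin (N+1)) :
    ∑ w ∈ Ici x, siegmundDual N P y w = ∑ z ∈ Iic y, P x z := by
  induction x using Fin.reverseInduction with
  | last => simp [siegmundDual, ← Fin.top_eq_last, Ici_top]
  | cast i ih =>
    rw [← add_sum_Ioi_eq_sum_Ici, Fin.Ioi_castSucc, ih]
    simp [siegmundDual, Fin.coeSucc_eq_succ]

theorem sum_siegmundDual (y : Fin (N+1)) :
    ∑ x, siegmundDual N P y x = ∑ z ∈ Iic y, P 0 z := by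
  rw [← sum_Ici_siegmundDual, ← bot_eq_zero, Ici_bot]

theorem siegmundKernel_mul_transpose_siegmundDual :
    siegmundKernel _ ℝ * (siegmundDual N P)ᵀ = P * siegmundKernel _ ℝ := by
  ext x y
  rw [siegmundKernel_mul_apply, mul_siegmundKernel_apply, ← sum_Ici_siegmundDual]
  rfl

theorem siegmundDual_nonneg (hP0 : ∀ x y, 0 ≤ P x y)
    (hmono : ∀ y x : Fin (N+1), (x : ℕ) < N →
      ∑ z ∈ Iic y, P (x + 1) z ≤ ∑ z ∈ Iic y, P x z) (y x : Fin (N+1)) :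
    0 ≤ siegmundDual N P y x := by
  rw [siegmundDual, of_apply]
  split_ifs with hx
  · exact sub_nonneg.mpr (hmono y x hx)
  · exact sum_nonneg fun z _ => hP0 x z

theorem siegmundDual_last (hP1 : ∀ x, ∑ y, P x y = 1) (x : Fin (N+1)) :
    siegmundDual N P (Fin.last N) x = if x = Fin.last N then 1 else 0 := by
  have hlast : x = Fin.last N ↔ ¬(x : ℕ) < N := by
    rw [Fin.ext_iff, Fin.val_last]; omega
  have hIic : Iic (Fin.last N) = univ := by rw [← Fin.top_eq_last, Iic_top]
  rw [siegmundDual, of_apply, hIic, hP1, hP1]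
  split_ifs <;> simp_all

theorem eq_last_of_siegmundDual_absorbing (hP0 : ∀ x y, 0 ≤ P x y)
    (hP1 : ∀ x, ∑ y, P x y = 1) (hirr : ∀ x y, ∃ n ≥ 1, 0 < (P ^ n) x y) {a : Fin (N+1)}
    (ha : ∀ y, siegmundDual N P a y = if y = a then 1 else 0) : a = Fin.last N := by
  by_contra hne
  have hlast : Fin.last N ∉ Iic a := by simpa using hne
  obtain ⟨x, hxa, hlt⟩ :=
    exists_sum_lt_one_of_irreducible hP0 hP1 hirr (mem_Iic.mpr (Fin.zero_le a)) hlast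
  rw [← sum_Ici_siegmundDual, sum_congr rfl fun w _ => ha w, sum_ite_eq',
    if_pos (mem_Ici.mpr (mem_Iic.mp hxa))] at hlt
  exact lt_irrefl 1 hlt

end SiegmundDual

/-- Siegmund duality for monotone irreducible stochastic kernels:
(a) `H_S·P̂ᵀ = P·H_S`; (b) `P̂ ≥ 0`; (c) the row sums of `P̂` are
`Σ_{z≤y} P(0,z) ≤ 1`, with row sum `P(0,0) < 1` at `0`;
(d) `N` is the unique absorbing state of `P̂`. -/
theorem stmt9 (N : ℕ) (hN : 1 ≤ N) (P : Matrix (Fin (N+1)) (Fin (N+1)) ℝ)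
    (hP0 : ∀ x y, 0 ≤ P x y) (hP1 : ∀ x, ∑ y, P x y = 1)
    (hirr : ∀ x y, ∃ n ≥ 1, 0 < (P ^ n) x y)
    (hmono : ∀ y x : Fin (N+1), (x : ℕ) < N →
      ∑ z ∈ Finset.Iic y, P (x + 1) z ≤ ∑ z ∈ Finset.Iic y, P x z) :
    let HS : Matrix (Fin (N+1)) (Fin (N+1)) ℝ :=
      Matrix.of fun x y => if x ≤ y then 1 else 0
    let Phat := siegmundDual N P
    HS * Phatᵀ = P * HS ∧
    (∀ y x, 0 ≤ Phat y x) ∧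
    (∀ y, ∑ x, Phat y x = ∑ z ∈ Finset.Iic y, P 0 z ∧
      ∑ z ∈ Finset.Iic y, P 0 z ≤ 1) ∧
    (∑ x, Phat 0 x = P 0 0 ∧ P 0 0 < 1) ∧
    (∀ y, Phat (Fin.last N) y = if y = Fin.last N then 1 else 0) ∧
    (∀ a, (∀ y, Phat a y = if y = a then 1 else 0) → a = Fin.last N) := by
  have h0last : (0 : Fin (N+1)) ≠ Fin.last N := by
    rw [Ne, Fin.ext_iff, Fin.val_zero, Fin.val_last]; omega
  refine ⟨siegmundKernel_mul_transpose_siegmundDual, siegmundDual_nonneg hP0 hmono,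
    fun y => ⟨sum_siegmundDual y, sum_apply_le_one hP0 hP1 _ 0⟩, ⟨?_,
    apply_self_lt_one_of_irreducible hP0 hP1 hirr h0last⟩, siegmundDual_last hP1,
    fun a => eq_last_of_siegmundDual_absorbing hP0 hP1 hirr⟩
  rw [sum_siegmundDual, ← bot_eq_zero, Iic_bot, sum_singleton]
end

section
/- Let N ≥ 1 and let P be the irreducible birth-and-death stochastic matrix on I = {0,1,…,N} with parameters p_x = P(x,x+1), q_x = P(x,x−1), r_x = P(x,x) (p_x + q_x + r_x = 1, q_0 = 0 = p_N, p_x > 0 for x < N, q_x > 0 for x ≥ 1, tridiagonal). Let π be a vector with strictly positive entries satisfying detailed balance: π(x)·P(x,y) = π(y)·P(y,x) for all x,y. If the symmetric matrix S defined by S(x,y) := π(x)·P(x,y) is positive semidefinite (equivalently, all eigenvalues of P are nonnegative), then P is monotone: p_x + q_{x+1} ≤ 1 for all x ∈ {0,…,N−1}. -/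
/-!
The `2 × 2` principal minor of `S = (π x P(x,y))` on `{x, y}` is nonnegative, which after
cancelling `π x π y` reads `P(x,y) P(y,x) ≤ P(x,x) P(y,y)`. Since row sums are one,
`P(x,x) ≤ 1 - P(x,y)` and `P(y,y) ≤ 1 - P(y,x)`, so
`P(x,y) P(y,x) ≤ (1 - P(x,y)) (1 - P(y,x))`, i.e. `P(x,y) + P(y,x) ≤ 1`.
Taking `y = x + 1` gives `p_x + q_{x+1} ≤ 1`.
-/

open Matrix Finset

open scoped ComplexOrder

namespace Matrix

theorem PosSemidef.apply_mul_apply_le {𝕜 n : Type*} [RCLike 𝕜] [Fintype n] {A : Matrix n n 𝕜}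
    (hA : A.PosSemidef) (i j : n) : A i j * A j i ≤ A i i * A j j := by
  have hminor := (hA.submatrix ![i, j]).det_nonneg
  rw [det_fin_two] at hminor
  simpa [sub_nonneg] using hminor

theorem diag_add_apply_le_one_of_mem_rowStochastic {R n : Type*} [Fintype n] [DecidableEq n]
    [Semiring R] [PartialOrder R] [IsOrderedRing R] {M : Matrix n n R}
    (hM : M ∈ rowStochastic R n) {i j : n} (hij : i ≠ j) : M i i + M i j ≤ 1 := by
  rw [← sum_row_of_mem_rowStochastic hM i, ← sum_pair hij]
  exact sum_le_univ_sum_of_nonneg fun k => nonneg_of_mem_rowStochastic hM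

end Matrix

theorem add_le_one_of_mul_le_mul {R : Type*} [CommRing R] [LinearOrder R] [IsStrictOrderedRing R]
    {a b c d : R} (h : a * b ≤ c * d) (hc : 0 ≤ c) (hd : 0 ≤ d) (hca : c ≤ 1 - a)
    (hdb : d ≤ 1 - b) : a + b ≤ 1 := by
  nlinarith [mul_le_mul hca hdb hd (hc.trans hca)]

theorem add_apply_le_one_of_posSemidef {n : Type*} [Fintype n] [DecidableEq n]
    {P : Matrix n n ℝ} (hP : P ∈ rowStochastic ℝ n) {π : n → ℝ} (hπ : ∀ x, 0 < π x)
    (hpsd : (of fun x y => π x * P x y).PosSemidef) {x y : n} (hxy : x ≠ y) :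
    P x y + P y x ≤ 1 := by
  have hminor := hpsd.apply_mul_apply_le x y
  simp only [of_apply] at hminor
  have hπxy := mul_pos (hπ x) (hπ y)
  have hcross : P x y * P y x ≤ P x x * P y y :=
    le_of_mul_le_mul_left (by linarith) hπxy
  have hrow_x := diag_add_apply_le_one_of_mem_rowStochastic hP hxy
  have hrow_y := diag_add_apply_le_one_of_mem_rowStochastic hP hxy.symm
  exact add_le_one_of_mul_le_mul hcross (nonneg_of_mem_rowStochastic hP)
    (nonneg_of_mem_rowStochastic hP) (by linarith) (by linarith)

theorem stmt13_general (N : ℕ) (P : Matrix (Fin (N+1)) (Fin (N+1)) ℝ)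
    (p q : Fin (N+1) → ℝ) (π : Fin (N+1) → ℝ)
    (hP0 : ∀ x y, 0 ≤ P x y) (hP1 : ∀ x, ∑ y, P x y = 1)
    (hup : ∀ x : Fin (N+1), (x : ℕ) < N → P x (x + 1) = p x)
    (hdown : ∀ x : Fin (N+1), 0 < (x : ℕ) → P x (x - 1) = q x)
    (hπpos : ∀ x, 0 < π x)
    (hpsd : (Matrix.of fun x y => π x * P x y).PosSemidef) :
    ∀ x : Fin (N+1), (x : ℕ) < N → p x + q (x + 1) ≤ 1 := by
  intro x hx
  have hsucc : ((x + 1 : Fin (N+1)) : ℕ) = x + 1 :=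
    Fin.val_add_one_of_lt (by rwa [Fin.lt_def, Fin.val_last])
  have hne : x ≠ x + 1 := fun h => by have := congrArg Fin.val h; omega
  have hdown_succ := hdown (x + 1) (by omega)
  rw [add_sub_cancel_right] at hdown_succ
  rw [← hup x hx, ← hdown_succ]
  exact add_apply_le_one_of_posSemidef (mem_rowStochastic_iff_sum.mpr ⟨hP0, hP1⟩) hπpos hpsd hne

/-- Proposition propo5 (i): a spectrally nonnegative irreducible birth-and-death chain
is monotone: if `S(x,y) = π(x)·P(x,y)` is positive semidefinite, then
`p_x + q_{x+1} ≤ 1` for all `x < N`. -/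
theorem stmt13 (N : ℕ) (hN : 1 ≤ N) (P : Matrix (Fin (N+1)) (Fin (N+1)) ℝ)
    (p q r : Fin (N+1) → ℝ) (π : Fin (N+1) → ℝ)
    (hP0 : ∀ x y, 0 ≤ P x y) (hP1 : ∀ x, ∑ y, P x y = 1)
    (htri : ∀ x y : Fin (N+1), ((x : ℕ) + 1 < (y : ℕ) ∨ (y : ℕ) + 1 < (x : ℕ)) → P x y = 0)
    (hup : ∀ x : Fin (N+1), (x : ℕ) < N → P x (x + 1) = p x)
    (hdown : ∀ x : Fin (N+1), 0 < (x : ℕ) → P x (x - 1) = q x)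
    (hdiag : ∀ x, P x x = r x)
    (hsum : ∀ x, p x + q x + r x = 1)
    (hq0 : q 0 = 0) (hpN : p (Fin.last N) = 0)
    (hppos : ∀ x : Fin (N+1), (x : ℕ) < N → 0 < p x)
    (hqpos : ∀ x : Fin (N+1), 0 < (x : ℕ) → 0 < q x)
    (hπpos : ∀ x, 0 < π x)
    (hdb : ∀ x y, π x * P x y = π y * P y x)
    (hpsd : (Matrix.of fun x y => π x * P x y).PosSemidef) :
    ∀ x : Fin (N+1), (x : ℕ) < N → p x + q (x + 1) ≤ 1 :=
  stmt13_general N P p q π hP0 hP1 hup hdown hπpos hpsd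
end

section
/- Let N ≥ 1 be an integer and let p : ℝ → ℝ be nondecreasing on the interval [0,1] and satisfy 0 ≤ p(u) ≤ 1 for all u ∈ [0,1]. Then for every integer x with 0 ≤ x ≤ N−1: (1 − x/N)·p(x/N) + ((x+1)/N)·(1 − p((x+1)/N)) ≤ 1. In other words, the 2-allele Moran model with bias mechanism p, i.e. the birth-and-death chain on {0,…,N} with p_x = (1 − x/N)·p(x/N) and q_x = (x/N)·(1 − p(x/N)), satisfies the monotonicity condition p_x + q_{x+1} ≤ 1 for all x < N, so its Siegmund dual exists. -/
open Set

/-- Proposition propo6: if the bias mechanism `p` of the 2-allele Moran model is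
nondecreasing on `[0,1]` with values in `[0,1]`, then the Moran birth-and-death chain
is monotone: for all `0 ≤ x ≤ N−1`,
`(1 − x/N)·p(x/N) + ((x+1)/N)·(1 − p((x+1)/N)) ≤ 1`. -/
theorem stmt15 (N : ℕ) (hN : 1 ≤ N) (p : ℝ → ℝ)
    (hmono : MonotoneOn p (Set.Icc (0:ℝ) 1))
    (hrange : ∀ u ∈ Set.Icc (0:ℝ) 1, 0 ≤ p u ∧ p u ≤ 1) :
    ∀ x : ℕ, x ≤ N - 1 →
      (1 - (x : ℝ) / N) * p ((x : ℝ) / N) +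
        (((x : ℝ) + 1) / N) * (1 - p (((x : ℝ) + 1) / N)) ≤ 1 := by
  intro x hx
  have hNpos : (0:ℝ) < N := by positivity
  have hxN : (x : ℝ) + 1 ≤ N := by
    have : x + 1 ≤ N := by omega
    exact_mod_cast this
  have ha : (x : ℝ) / N ∈ Set.Icc (0:ℝ) 1 := by
    constructor
    · positivity
    · rw [div_le_one hNpos]; linarith
  have hb : ((x : ℝ) + 1) / N ∈ Set.Icc (0:ℝ) 1 := by
    constructor
    · positivity
    · rw [div_le_one hNpos]; linarith
  have hab : p ((x : ℝ) / N) ≤ p (((x : ℝ) + 1) / N) := by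
    exact hmono ha hb (by gcongr; linarith)
  have h1 := hrange _ ha
  have h2 := hrange _ hb
  have ha0 := ha.1
  have ha1 := ha.2
  have hb0 := hb.1
  have hb1 := hb.2
  nlinarith [mul_nonneg (sub_nonneg.2 ha1) (sub_nonneg.2 hab),
    mul_nonneg hb0 h2.1, mul_nonneg (sub_nonneg.2 hb1) (sub_nonneg.2 h2.2)]
end

section
/- Let N ≥ 1, I = {0,1,…,N}, fix k with 0 ≤ k < N, and let α ≥ 0, β ≥ 0. Define γ(x) = α if x ≤ k and γ(x) = β if x > k, and the generalized ultrametric matrix H(x,y) = 1{x ≤ y}·(1 + γ(x)·1{(x ≤ k) ↔ (y ≤ k)}). Let P be a stochastic matrix on I and let P̂ be the unique matrix satisfying H·P̂ᵀ = P·H (H is invertible, being triangular with positive diagonal). Assume: (1) there exists δ ∈ (0,1) such that Σ_{z≤k} P(x,z) = δ for every x ∈ I; (2) for every y ≤ k, the map x ↦ Σ_{z≤y} P(x,z) is nonincreasing in x on all of I; (3) for every y > k, the map x ↦ Σ_{k<z≤y} P(x,z) is nonincreasing in x on all of I. Then P̂ is entrywise nonnegative. If moreover β > 0, then P̂ is substochastic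 (all row sums ≤ 1) if and only if δ = (1+β)/(1+α+β); and in that case the row sums of P̂ at the states k and N equal 1. -/
/-!
Applying `H` to the `i`-th row of `P̂` gives the `i`-th column `F(·, i)` of `P H`, where
`F(x, i) = (1+α) ∑_{z ≤ i} P(x,z)` for `i ≤ k` and `F(x, i) = δ + (1+β) ∑_{k<z≤i} P(x,z)` for
`i > k`. Each `F(·, i)` is nonnegative as `P ≥ 0`, and nonincreasing by (1)–(3). Since `H` is
upper triangular and consecutive rows of `H` differ only in the diagonal entry (except across the
cut), every entry of `P̂` is a positive multiple of `F(j,i) - F(j+1,i)`, of `F(N,i)`, or, at the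
cut, of `β F(k,i) + F(k,i) - F(k+1,i)`; hence `P̂ ≥ 0`.

Up to the factor `(1+α)(1+β)`, the `i`-th row sum of `P̂` is `(1+β) F(0,i) + α F(k+1,i)`. As
`F(x, ·)` increases within each block, the row sums peak at `i = k` and at `i = N`. With
`D = (1+α+β)δ - (1+β)` these two row sums are `1 + D/(1+β)` and `1 - βD/((1+α)(1+β))`, so both
are at most `1` iff `D = 0`, and then both equal `1`.
-/

open Matrix Finset

lemma forall_le_one_iff_eq_zero {ι : Type*} {r : ι → ℝ} {a b : ι} {s t u D : ℝ}
    (hs : 0 < s) (ht : 0 < t) (hu : 0 < u) (hr : ∀ i, r i ≤ r a ∨ r i ≤ r b)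
    (ha : s * (r a - 1) = D) (hb : t * (r b - 1) = -(u * D)) :
    ((∀ i, r i ≤ 1) ↔ D = 0) ∧ (D = 0 → r a = 1 ∧ r b = 1) := by
  have hone : D = 0 → r a = 1 ∧ r b = 1 := by
    rintro rfl
    constructor
    · simpa [hs.ne', sub_eq_zero] using ha
    · simpa [ht.ne', sub_eq_zero] using hb
  refine ⟨⟨fun h => le_antisymm ?_ ?_, fun hD i => ?_⟩, hone⟩
  · nlinarith [h a]
  · nlinarith [h b]
  · obtain ⟨ha1, hb1⟩ := hone hD
    rcases hr i with hi | hi <;> linarith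

/-- The paper's `γ`. -/
def blockWeight (k : ℕ) (α β : ℝ) (x : ℕ) : ℝ := if x ≤ k then α else β

def ultrametricKernel (N k : ℕ) (α β : ℝ) : Matrix (Fin (N+1)) (Fin (N+1)) ℝ :=
  of fun x y => if x ≤ y then
    1 + (if ((x : ℕ) ≤ k ↔ (y : ℕ) ≤ k) then blockWeight k α β x else 0) else 0

def lowerBlock (N k : ℕ) : Finset (Fin (N+1)) := {z | (z : ℕ) ≤ k}

def upperBlock (N k : ℕ) : Finset (Fin (N+1)) := {z | k < (z : ℕ)}

lemma sum_lowerBlock_add_sum_upperBlock {N k : ℕ} (Q : Fin (N+1) → ℝ) :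
    ∑ z ∈ lowerBlock N k, Q z + ∑ z ∈ upperBlock N k, Q z = ∑ z, Q z := by
  simpa only [lowerBlock, upperBlock, not_le] using
    sum_filter_add_sum_filter_not univ (fun z : Fin (N+1) => (z : ℕ) ≤ k) Q

namespace ultrametricKernel

variable {N k : ℕ} {α β : ℝ}

lemma nonneg (hα : 0 ≤ α) (hβ : 0 ≤ β) (x y : Fin (N+1)) :
    0 ≤ ultrametricKernel N k α β x y := by
  unfold ultrametricKernel blockWeight
  simp only [of_apply]
  split_ifs <;> linarith

lemma mulVec_castSucc (Q : Fin (N+1) → ℝ) (j : Fin N) (hj : (j : ℕ) ≠ k) :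
    (ultrametricKernel N k α β *ᵥ Q) j.castSucc
      = (1 + blockWeight k α β j) * Q j.castSucc + (ultrametricKernel N k α β *ᵥ Q) j.succ := by
  have hrow : ultrametricKernel N k α β j.castSucc
      = Pi.single j.castSucc (1 + blockWeight k α β j) + ultrametricKernel N k α β j.succ := by
    ext z
    simp only [ultrametricKernel, of_apply, Pi.add_apply, Pi.single_apply, Fin.le_def,
      Fin.ext_iff, Fin.val_castSucc, Fin.val_succ, blockWeight]
    split_ifs <;> first | omega | ring
  simp only [mulVec, hrow, add_dotProduct, single_dotProduct]

lemma mulVec_cut (Q : Fin (N+1) → ℝ) (c : Fin N) (hc : (c : ℕ) = k) :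
    (ultrametricKernel N k α β *ᵥ Q) c.castSucc
      = (1 + α) * Q c.castSucc + ∑ z ∈ upperBlock N k, Q z := by
  have hrow : ultrametricKernel N k α β c.castSucc
      = Pi.single c.castSucc (1 + α) + fun z : Fin (N+1) => if k < (z : ℕ) then 1 else 0 := by
    ext z
    simp only [ultrametricKernel, of_apply, Pi.add_apply, Pi.single_apply, Fin.le_def,
      Fin.ext_iff, Fin.val_castSucc, blockWeight]
    split_ifs <;> first | omega | ring
  simp only [mulVec, hrow, add_dotProduct, single_dotProduct]
  simp only [dotProduct, ite_mul, one_mul, zero_mul, ← sum_filter, upperBlock]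

lemma mulVec_cut_succ (Q : Fin (N+1) → ℝ) (c : Fin N) (hc : (c : ℕ) = k) :
    (ultrametricKernel N k α β *ᵥ Q) c.succ = (1 + β) * ∑ z ∈ upperBlock N k, Q z := by
  have hrow : ultrametricKernel N k α β c.succ
      = fun z : Fin (N+1) => if k < (z : ℕ) then 1 + β else 0 := by
    ext z
    simp only [ultrametricKernel, of_apply, Fin.le_def, Fin.val_succ, blockWeight]
    split_ifs <;> first | omega | ring
  simp only [mulVec, hrow, dotProduct, ite_mul, zero_mul, ← sum_filter, upperBlock, mul_sum]

lemma mulVec_zero (Q : Fin (N+1) → ℝ) :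
    (ultrametricKernel N k α β *ᵥ Q) 0
      = (1 + α) * ∑ z ∈ lowerBlock N k, Q z + ∑ z ∈ upperBlock N k, Q z := by
  have hrow : ultrametricKernel N k α β 0
      = fun z : Fin (N+1) => if (z : ℕ) ≤ k then 1 + α else 1 := by
    ext z
    simp only [ultrametricKernel, of_apply, if_true, Fin.val_zero, zero_le, true_iff, blockWeight]
    split_ifs <;> first | omega | ring
  simp only [mulVec, hrow, dotProduct, ite_mul, one_mul, sum_ite, mul_sum, lowerBlock,
    upperBlock, not_le]

lemma mulVec_last (Q : Fin (N+1) → ℝ) (hk : k < N) :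
    (ultrametricKernel N k α β *ᵥ Q) (Fin.last N) = (1 + β) * Q (Fin.last N) := by
  have hrow : ultrametricKernel N k α β (Fin.last N) = Pi.single (Fin.last N) (1 + β) := by
    ext z
    simp only [ultrametricKernel, of_apply, Pi.single_apply, Fin.le_def, Fin.ext_iff,
      Fin.val_last, blockWeight]
    split_ifs <;> first | omega | ring
  simp only [mulVec, hrow, single_dotProduct]

lemma mul_sum_eq_mulVec (Q : Fin (N+1) → ℝ) (c : Fin N) (hc : (c : ℕ) = k) :
    (1 + α) * (1 + β) * ∑ z, Q z
      = (1 + β) * (ultrametricKernel N k α β *ᵥ Q) 0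
        + α * (ultrametricKernel N k α β *ᵥ Q) c.succ := by
  rw [mulVec_zero, mulVec_cut_succ Q c hc, ← sum_lowerBlock_add_sum_upperBlock]
  ring

lemma nonneg_of_mulVec_antitone (hα : 0 ≤ α) (hβ : 0 ≤ β) (hk : k < N) {Q : Fin (N+1) → ℝ}
    (hnonneg : ∀ x, 0 ≤ (ultrametricKernel N k α β *ᵥ Q) x)
    (hanti : Antitone (ultrametricKernel N k α β *ᵥ Q)) (x : Fin (N+1)) : 0 ≤ Q x := by
  induction x using Fin.lastCases with
  | last =>
    refine nonneg_of_mul_nonneg_right ?_ (by linarith : (0 : ℝ) < 1 + β)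
    simpa only [mulVec_last Q hk] using hnonneg (Fin.last N)
  | cast j =>
    have hstep := hanti (Fin.castSucc_le_succ j)
    by_cases hj : (j : ℕ) = k
    · -- with `v = H *ᵥ Q`: `(1 + α)(1 + β) Q k = β v k + (v k - v (k+1))`, and `v k ≥ v (k+1)`
      have hcut := mulVec_cut (α := α) (β := β) Q j hj
      have hsucc := mulVec_cut_succ (α := α) (β := β) Q j hj
      refine nonneg_of_mul_nonneg_right ?_ (by positivity : (0 : ℝ) < (1 + α) * (1 + β))
      nlinarith [hnonneg j.castSucc]
    · have hrec := mulVec_castSucc (α := α) (β := β) Q j hj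
      have hw : 0 < 1 + blockWeight k α β j := by unfold blockWeight; split_ifs <;> linarith
      exact nonneg_of_mul_nonneg_right (by linarith) hw

lemma apply_le_apply_of_le (hα : 0 ≤ α) (hβ : 0 ≤ β) {y y' : Fin (N+1)} (hyy' : y ≤ y')
    (hblock : (y : ℕ) ≤ k ↔ (y' : ℕ) ≤ k) (z : Fin (N+1)) :
    ultrametricKernel N k α β z y ≤ ultrametricKernel N k α β z y' := by
  by_cases hzy : z ≤ y
  · simp only [ultrametricKernel, of_apply, if_pos hzy, if_pos (hzy.trans hyy'), hblock, le_refl]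
  · simpa only [ultrametricKernel, of_apply, if_neg hzy] using nonneg hα hβ z y'

lemma mul_apply_of_le (P : Matrix (Fin (N+1)) (Fin (N+1)) ℝ) (x y : Fin (N+1))
    (hy : (y : ℕ) ≤ k) :
    (P * ultrametricKernel N k α β) x y = (1 + α) * ∑ z ∈ Iic y, P x z := by
  have hcol : ∀ z, ultrametricKernel N k α β z y = if z ≤ y then 1 + α else 0 := by
    intro z
    simp only [ultrametricKernel, of_apply, Fin.le_def, blockWeight]
    split_ifs <;> first | omega | ring
  simp only [mul_apply, hcol, mul_ite, mul_zero, ← sum_filter, filter_ge_eq_Iic]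
  rw [← sum_mul, mul_comm]

lemma mul_apply_of_lt (P : Matrix (Fin (N+1)) (Fin (N+1)) ℝ) (x y : Fin (N+1))
    (hy : k < (y : ℕ)) :
    (P * ultrametricKernel N k α β) x y
      = ∑ z ∈ lowerBlock N k, P x z
        + (1 + β) * ∑ z ∈ univ.filter (fun z : Fin (N+1) => k < (z : ℕ) ∧ z ≤ y), P x z := by
  have hcol : ∀ z, ultrametricKernel N k α β z y
      = (if (z : ℕ) ≤ k then 1 else 0) + if k < (z : ℕ) ∧ z ≤ y then 1 + β else 0 := by
    intro z
    simp only [ultrametricKernel, of_apply, Fin.le_def, blockWeight]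
    split_ifs <;> first | omega | ring
  simp only [mul_apply, hcol, mul_add, mul_ite, mul_one, mul_zero, sum_add_distrib,
    ← sum_filter, lowerBlock, mul_sum, mul_comm]

lemma mul_apply_le_mul_apply (hα : 0 ≤ α) (hβ : 0 ≤ β) {P : Matrix (Fin (N+1)) (Fin (N+1)) ℝ}
    (hP : ∀ x z, 0 ≤ P x z) (x : Fin (N+1)) {y y' : Fin (N+1)} (hyy' : y ≤ y')
    (hblock : (y : ℕ) ≤ k ↔ (y' : ℕ) ≤ k) :
    (P * ultrametricKernel N k α β) x y ≤ (P * ultrametricKernel N k α β) x y' := by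
  simp only [mul_apply]
  exact sum_le_sum fun z _ =>
    mul_le_mul_of_nonneg_left (apply_le_apply_of_le hα hβ hyy' hblock z) (hP x z)

lemma mul_apply_nonneg (hα : 0 ≤ α) (hβ : 0 ≤ β) {P : Matrix (Fin (N+1)) (Fin (N+1)) ℝ}
    (hP : ∀ x z, 0 ≤ P x z) (x y : Fin (N+1)) : 0 ≤ (P * ultrametricKernel N k α β) x y := by
  simp only [mul_apply]
  exact sum_nonneg fun z _ => mul_nonneg (hP x z) (nonneg hα hβ z y)

lemma mul_apply_castSucc (P : Matrix (Fin (N+1)) (Fin (N+1)) ℝ) (x : Fin (N+1)) (c : Fin N)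
    (hc : (c : ℕ) = k) :
    (P * ultrametricKernel N k α β) x c.castSucc = (1 + α) * ∑ z ∈ lowerBlock N k, P x z := by
  have hIic : Iic c.castSucc = lowerBlock N k := by
    ext z
    simp [lowerBlock, Fin.le_def, hc]
  rw [mul_apply_of_le P x _ (by simp [hc]), hIic]

lemma mul_apply_last (P : Matrix (Fin (N+1)) (Fin (N+1)) ℝ) (x : Fin (N+1)) (hk : k < N) :
    (P * ultrametricKernel N k α β) x (Fin.last N)
      = ∑ z ∈ lowerBlock N k, P x z + (1 + β) * ∑ z ∈ upperBlock N k, P x z := by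
  rw [mul_apply_of_lt P x _ (by simpa using hk)]
  simp only [Fin.le_last, and_true, upperBlock]

lemma antitone_mul_apply (hα : 0 ≤ α) (hβ : 0 ≤ β) {P : Matrix (Fin (N+1)) (Fin (N+1)) ℝ}
    {δ : ℝ} (hcut : ∀ x, ∑ z ∈ lowerBlock N k, P x z = δ)
    (hmono1 : ∀ y : Fin (N+1), (y : ℕ) ≤ k → ∀ x x' : Fin (N+1), x ≤ x' →
      ∑ z ∈ Iic y, P x' z ≤ ∑ z ∈ Iic y, P x z)
    (hmono2 : ∀ y : Fin (N+1), k < (y : ℕ) → ∀ x x' : Fin (N+1), x ≤ x' →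
      ∑ z ∈ univ.filter (fun z : Fin (N+1) => k < (z : ℕ) ∧ z ≤ y), P x' z ≤
      ∑ z ∈ univ.filter (fun z : Fin (N+1) => k < (z : ℕ) ∧ z ≤ y), P x z)
    (y : Fin (N+1)) : Antitone fun x => (P * ultrametricKernel N k α β) x y := by
  intro x x' hxx'
  rcases le_or_gt (y : ℕ) k with hy | hy
  · simp only [mul_apply_of_le P _ y hy]
    exact mul_le_mul_of_nonneg_left (hmono1 y hy x x' hxx') (by linarith)
  · simp only [mul_apply_of_lt P _ y hy, hcut]
    have hβ1 : (0 : ℝ) ≤ 1 + β := by linarith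
    exact add_le_add_right (mul_le_mul_of_nonneg_left (hmono2 y hy x x' hxx') hβ1) δ

variable {P Phat : Matrix (Fin (N+1)) (Fin (N+1)) ℝ}

lemma mulVec_dual_row (hdual : ultrametricKernel N k α β * Phatᵀ = P * ultrametricKernel N k α β)
    (i : Fin (N+1)) :
    ultrametricKernel N k α β *ᵥ Phat i = fun x => (P * ultrametricKernel N k α β) x i := by
  rw [← hdual]
  rfl

lemma sum_dual_row (hdual : ultrametricKernel N k α β * Phatᵀ = P * ultrametricKernel N k α β)
    (c : Fin N) (hc : (c : ℕ) = k) (i : Fin (N+1)) :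
    (1 + α) * (1 + β) * ∑ j, Phat i j
      = (1 + β) * (P * ultrametricKernel N k α β) 0 i
        + α * (P * ultrametricKernel N k α β) c.succ i := by
  rw [mul_sum_eq_mulVec (Phat i) c hc, mulVec_dual_row hdual]

lemma sum_dual_row_le (hα : 0 ≤ α) (hβ : 0 ≤ β) (hP : ∀ x z, 0 ≤ P x z)
    (hdual : ultrametricKernel N k α β * Phatᵀ = P * ultrametricKernel N k α β)
    (c : Fin N) (hc : (c : ℕ) = k) {i i' : Fin (N+1)} (hii' : i ≤ i')
    (hblock : (i : ℕ) ≤ k ↔ (i' : ℕ) ≤ k) :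
    ∑ j, Phat i j ≤ ∑ j, Phat i' j := by
  refine le_of_mul_le_mul_left ?_ (by positivity : (0 : ℝ) < (1 + α) * (1 + β))
  rw [sum_dual_row hdual c hc, sum_dual_row hdual c hc]
  gcongr <;> exact mul_apply_le_mul_apply hα hβ hP _ hii' hblock

lemma sum_dual_row_cut (hα : 0 ≤ α)
    (hdual : ultrametricKernel N k α β * Phatᵀ = P * ultrametricKernel N k α β)
    {δ : ℝ} (hcut : ∀ x, ∑ z ∈ lowerBlock N k, P x z = δ) (c : Fin N) (hc : (c : ℕ) = k) :
    (1 + β) * (∑ j, Phat c.castSucc j - 1) = (1 + α + β) * δ - (1 + β) := by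
  have h := sum_dual_row hdual c hc c.castSucc
  rw [mul_apply_castSucc P _ c hc, mul_apply_castSucc P _ c hc, hcut, hcut] at h
  refine mul_left_cancel₀ (by linarith : (1 + α) ≠ 0) ?_
  linear_combination h

lemma sum_dual_row_last (hdual : ultrametricKernel N k α β * Phatᵀ = P * ultrametricKernel N k α β)
    (hP : ∀ x, ∑ y, P x y = 1) {δ : ℝ} (hcut : ∀ x, ∑ z ∈ lowerBlock N k, P x z = δ)
    (c : Fin N) (hc : (c : ℕ) = k) :
    (1 + α) * (1 + β) * (∑ j, Phat (Fin.last N) j - 1)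
      = -(β * ((1 + α + β) * δ - (1 + β))) := by
  have hk : k < N := hc ▸ c.isLt
  have hupper : ∀ x, ∑ z ∈ upperBlock N k, P x z = 1 - δ := fun x => by
    rw [← hP x, ← sum_lowerBlock_add_sum_upperBlock, hcut]
    ring
  have h := sum_dual_row hdual c hc (Fin.last N)
  rw [mul_apply_last P _ hk, mul_apply_last P _ hk, hcut, hcut, hupper, hupper] at h
  linear_combination h

end ultrametricKernel

open ultrametricKernel

/-- Proposition prop7: for the generalized ultrametric kernel `H` with parameters
`α, β ≥ 0` and cut point `k < N`, conditions (1)–(3) imply that the `H`-dual `P̂` of a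
stochastic `P` is entrywise nonnegative; and if `β > 0`, `P̂` is substochastic iff
`δ = (1+β)/(1+α+β)`, in which case the row sums at `k` and `N` equal `1`. -/
theorem stmt16 (N k : ℕ) (hk : k < N) (α β : ℝ)
    (hα : 0 ≤ α) (hβ : 0 ≤ β) (δ : ℝ)
    (P : Matrix (Fin (N+1)) (Fin (N+1)) ℝ) (Phat : Matrix (Fin (N+1)) (Fin (N+1)) ℝ)
    (hP0 : ∀ x y, 0 ≤ P x y) (hP1 : ∀ x, ∑ y, P x y = 1)
    (hdual :
      (Matrix.of fun x y : Fin (N+1) =>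
        if x ≤ y then
          1 + (if ((x : ℕ) ≤ k ↔ (y : ℕ) ≤ k) then
            (if (x : ℕ) ≤ k then α else β) else 0)
        else 0) * Phatᵀ =
      P * (Matrix.of fun x y : Fin (N+1) =>
        if x ≤ y then
          1 + (if ((x : ℕ) ≤ k ↔ (y : ℕ) ≤ k) then
            (if (x : ℕ) ≤ k then α else β) else 0)
        else 0))
    (hcut : ∀ x : Fin (N+1),
      ∑ z ∈ Finset.univ.filter (fun z : Fin (N+1) => (z : ℕ) ≤ k), P x z = δ)
    (hmono1 : ∀ y : Fin (N+1), (y : ℕ) ≤ k → ∀ x x' : Fin (N+1), x ≤ x' →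
      ∑ z ∈ Finset.Iic y, P x' z ≤ ∑ z ∈ Finset.Iic y, P x z)
    (hmono2 : ∀ y : Fin (N+1), k < (y : ℕ) → ∀ x x' : Fin (N+1), x ≤ x' →
      ∑ z ∈ Finset.univ.filter (fun z : Fin (N+1) => k < (z : ℕ) ∧ z ≤ y), P x' z ≤
      ∑ z ∈ Finset.univ.filter (fun z : Fin (N+1) => k < (z : ℕ) ∧ z ≤ y), P x z) :
    (∀ i j, 0 ≤ Phat i j) ∧
    (0 < β →
      ((∀ x, ∑ y, Phat x y ≤ 1) ↔ δ = (1 + β) / (1 + α + β)) ∧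
      ((∀ x, ∑ y, Phat x y ≤ 1) →
        (∑ y, Phat (⟨k, by omega⟩ : Fin (N+1)) y = 1 ∧
         ∑ y, Phat (Fin.last N) y = 1))) := by
  have hH : ultrametricKernel N k α β * Phatᵀ = P * ultrametricKernel N k α β := hdual
  let c : Fin N := ⟨k, hk⟩
  refine ⟨fun i => nonneg_of_mulVec_antitone hα hβ hk ?_ ?_, fun hβpos => ?_⟩
  · rw [mulVec_dual_row hH i]
    exact fun x => mul_apply_nonneg hα hβ hP0 x i
  · rw [mulVec_dual_row hH i]
    exact antitone_mul_apply hα hβ hcut hmono1 hmono2 i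
  have hblocks : ∀ i, ∑ j, Phat i j ≤ ∑ j, Phat c.castSucc j ∨
      ∑ j, Phat i j ≤ ∑ j, Phat (Fin.last N) j := by
    intro i
    rcases le_or_gt (i : ℕ) k with hi | hi
    · exact .inl (sum_dual_row_le hα hβ hP0 hH c rfl (Fin.le_def.2 hi) (by simp [c, hi]))
    · refine .inr (sum_dual_row_le hα hβ hP0 hH c rfl (Fin.le_last i) ?_)
      simp only [Fin.val_last]
      omega
  obtain ⟨hiff, hone⟩ := forall_le_one_iff_eq_zero (by positivity) (by positivity) hβpos hblocks
    (sum_dual_row_cut hα hH hcut c rfl) (sum_dual_row_last hH hP1 hcut c rfl)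
  have hδ : δ = (1 + β) / (1 + α + β) ↔ (1 + α + β) * δ - (1 + β) = 0 := by
    rw [eq_div_iff (by positivity), sub_eq_zero, mul_comm]
  exact ⟨hiff.trans hδ.symm, fun h => hone (hiff.mp h)⟩
end

section
/- Let N ≥ 3, I = {0,1,…,N}, and let P be an irreducible birth-and-death stochastic matrix on I with parameters p_x = P(x,x+1) > 0 for x < N, q_x = P(x,x−1) > 0 for x ≥ 1, r_x = P(x,x), p_x + q_x + r_x = 1, q_0 = 0 = p_N, and P(x,y) = 0 for |x−y| > 1. Fix k with 1 ≤ k ≤ N−2 and α ≥ 0, β ≥ 0, and let H be the generalized ultrametric matrix H(x,y) = 1{x ≤ y}·(1 + γ(x)·1{(x ≤ k) ↔ (y ≤ k)}) with γ(x) = α for x ≤ k and γ(x) = β for x > k. If there exists a substochastic matrix P̂ (entrywise nonnegative with all row sums ≤ 1) satisfying H·P̂ᵀ = P·H, then necessarily β = 0 and α = 0 (so H is the Siegmund kernel H_S(x,y) = 1{x ≤ y}), and P is monotone: p_x + q_{x+1} ≤ 1 for all x ∈ {0,…,N−1}. -/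
open Matrix Finset

private lemma sum_ite_single' {n : ℕ} (f : Fin n → ℝ) (c : Fin n → Prop) [DecidablePred c]
    (a : Fin n) (ha : c a) (h : ∀ z, c z → z ≠ a → f z = 0) :
    (∑ z, if c z then f z else 0) = f a := by
  rw [Finset.sum_eq_single a]
  · rw [if_pos ha]
  · intro b _ hb
    by_cases hcb : c b
    · rw [if_pos hcb, h b hcb hb]
    · rw [if_neg hcb]
  · intro hmem; exact absurd (Finset.mem_univ a) hmem

private lemma sum_split' {n : ℕ} (f : Fin n → ℝ) (c : Fin n → Prop) [DecidablePred c] :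
    (∑ z, f z) = (∑ z, if c z then f z else 0) + (∑ z, if c z then 0 else f z) := by
  rw [← Finset.sum_add_distrib]
  apply Finset.sum_congr rfl
  intro z _
  by_cases hz : c z <;> simp [hz]

set_option maxHeartbeats 1600000 in
/-- Proposition prop8 (rigidity): if an irreducible birth-and-death stochastic kernel
`P` on `{0,…,N}` (`N ≥ 3`) admits a substochastic `H_{α,β}`-dual for the generalized
ultrametric kernel with cut `1 ≤ k ≤ N−2`, then necessarily `β = 0` and `α = 0` (so `H`
is the Siegmund kernel), and `P` is monotone. -/
theorem stmt17 (N k : ℕ) (hN : 3 ≤ N) (hk1 : 1 ≤ k) (hk2 : k ≤ N - 2)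
    (α β : ℝ) (hα : 0 ≤ α) (hβ : 0 ≤ β)
    (P : Matrix (Fin (N+1)) (Fin (N+1)) ℝ) (Phat : Matrix (Fin (N+1)) (Fin (N+1)) ℝ)
    (p q r : Fin (N+1) → ℝ)
    (hP0 : ∀ x y, 0 ≤ P x y) (hP1 : ∀ x, ∑ y, P x y = 1)
    (htri : ∀ x y : Fin (N+1), ((x : ℕ) + 1 < (y : ℕ) ∨ (y : ℕ) + 1 < (x : ℕ)) → P x y = 0)
    (hup : ∀ x : Fin (N+1), (x : ℕ) < N → P x (x + 1) = p x)
    (hdown : ∀ x : Fin (N+1), 0 < (x : ℕ) → P x (x - 1) = q x)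
    (hdiag : ∀ x, P x x = r x)
    (hsum : ∀ x, p x + q x + r x = 1)
    (hq0 : q 0 = 0) (hpN : p (Fin.last N) = 0)
    (hppos : ∀ x : Fin (N+1), (x : ℕ) < N → 0 < p x)
    (hqpos : ∀ x : Fin (N+1), 0 < (x : ℕ) → 0 < q x)
    (hPhat0 : ∀ i j, 0 ≤ Phat i j)
    (hPhatsub : ∀ x, ∑ y, Phat x y ≤ 1)
    (hdual :
      (Matrix.of fun x y : Fin (N+1) =>
        if x ≤ y then
          1 + (if ((x : ℕ) ≤ k ↔ (y : ℕ) ≤ k) then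
            (if (x : ℕ) ≤ k then α else β) else 0)
        else 0) * Phatᵀ =
      P * (Matrix.of fun x y : Fin (N+1) =>
        if x ≤ y then
          1 + (if ((x : ℕ) ≤ k ↔ (y : ℕ) ≤ k) then
            (if (x : ℕ) ≤ k then α else β) else 0)
        else 0)) :
    β = 0 ∧ α = 0 ∧ ∀ x : Fin (N+1), (x : ℕ) < N → p x + q (x + 1) ≤ 1 := by
  have hkN : k + 2 ≤ N := by omega
  set Hf : Matrix (Fin (N+1)) (Fin (N+1)) ℝ :=
    (Matrix.of fun x y : Fin (N+1) =>
      if x ≤ y then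
        1 + (if ((x : ℕ) ≤ k ↔ (y : ℕ) ≤ k) then
          (if (x : ℕ) ≤ k then α else β) else 0)
      else 0) with hHf
  -- entrywise dual equations
  have E : ∀ x y : Fin (N+1),
      (∑ z : Fin (N+1), Hf x z * Phat y z) = ∑ z : Fin (N+1), P x z * Hf z y := by
    intro x y
    have h := congrFun (congrFun hdual x) y
    simpa [Matrix.mul_apply, Matrix.transpose_apply] using h
  -- closed form for entries of H
  have hH : ∀ x y : Fin (N+1), Hf x y =
      if (x:ℕ) ≤ (y:ℕ) then
        (if (x:ℕ) ≤ k then (if (y:ℕ) ≤ k then 1+α else 1)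
         else (if (y:ℕ) ≤ k then 1 else 1+β))
      else 0 := by
    intro x y
    rw [hHf]
    simp only [Matrix.of_apply]
    by_cases h1 : (x:ℕ) ≤ (y:ℕ)
    · by_cases h3 : (x:ℕ) ≤ k <;> by_cases h2 : (y:ℕ) ≤ k <;>
        simp [Fin.le_def, h1, h2, h3]
    · simp [Fin.le_def, h1]
  -- special indices
  set kf : Fin (N+1) := ⟨k, by omega⟩ with hkf
  set k1f : Fin (N+1) := ⟨k+1, by omega⟩ with hk1f
  set k2f : Fin (N+1) := ⟨k+2, by omega⟩ with hk2f
  set nf : Fin (N+1) := Fin.last N with hnf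
  have hkfv : (kf : ℕ) = k := rfl
  have hk1fv : (k1f : ℕ) = k + 1 := rfl
  have hk2fv : (k2f : ℕ) = k + 2 := rfl
  have hnfv : (nf : ℕ) = N := rfl
  have hk1eq : k1f = kf + 1 := by
    apply Fin.ext
    have hlt : kf < Fin.last N := by rw [Fin.lt_def, hkfv, Fin.val_last]; omega
    rw [hk1fv, Fin.val_add_one_of_lt hlt, hkfv]
  have hsub : k1f - 1 = kf := by rw [hk1eq, add_sub_cancel_right]
  have hqk1 : P k1f kf = q k1f := by
    have h := hdown k1f (by rw [hk1fv]; omega)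
    rwa [hsub] at h
  have hqk1pos : 0 < q k1f := hqpos k1f (by rw [hk1fv]; omega)
  -- singleton sums for P rows
  have hPk1k : (∑ z : Fin (N+1), if (z:ℕ) ≤ k then P k1f z else 0) = q k1f := by
    rw [sum_ite_single' _ _ kf (by rw [hkfv]) ?_]
    · exact hqk1
    · intro z hz hzk
      apply htri
      right
      rw [hk1fv]
      have : (z:ℕ) ≠ k := fun h => hzk (Fin.ext (by rw [hkfv, h]))
      omega
  -- STEP 1 : β = 0
  have hβ0 : β = 0 := by
    -- tail sums of row N of Phat
    have hS2 : (1+β) * (∑ z : Fin (N+1), if k+2 ≤ (z:ℕ) then Phat nf z else 0) = 1 + β := by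
      have hLHS : (∑ z : Fin (N+1), Hf k2f z * Phat nf z)
          = (1+β) * ∑ z : Fin (N+1), (if k+2 ≤ (z:ℕ) then Phat nf z else 0) := by
        rw [Finset.mul_sum]
        apply Finset.sum_congr rfl
        intro z _
        rw [hH, hk2fv]
        by_cases hz : k+2 ≤ (z:ℕ)
        · rw [if_pos hz, if_pos hz, if_neg (by omega), if_neg (by omega)]
        · simp [hz]
      have hRHS : (∑ z : Fin (N+1), P k2f z * Hf z nf) = 1 + β := by
        have : ∀ z : Fin (N+1), P k2f z * Hf z nf = P k2f z * (1+β) := by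
          intro z
          by_cases hz : (z:ℕ) ≤ k
          · rw [htri k2f z (by rw [hk2fv]; omega), zero_mul, zero_mul]
          · rw [hH, hnfv, if_pos (by omega), if_neg hz, if_neg (by omega)]
        rw [Finset.sum_congr rfl fun z _ => this z, ← Finset.sum_mul, hP1, one_mul]
      rw [← hLHS, E k2f nf, hRHS]
    have h1β : (0:ℝ) < 1 + β := by linarith
    have hS2' : (∑ z : Fin (N+1), if k+2 ≤ (z:ℕ) then Phat nf z else 0) = 1 :=
      mul_left_cancel₀ h1β.ne' (by rw [hS2, mul_one])
    have hS1 : (∑ z : Fin (N+1), if k+1 ≤ (z:ℕ) then Phat nf z else 0) = 1 := by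
      apply le_antisymm
      · calc (∑ z : Fin (N+1), if k+1 ≤ (z:ℕ) then Phat nf z else 0) ≤ ∑ z : Fin (N+1), Phat nf z := by
              apply Finset.sum_le_sum
              intro z _
              by_cases hz : k+1 ≤ (z:ℕ)
              · rw [if_pos hz]
              · rw [if_neg hz]; exact hPhat0 nf z
          _ ≤ 1 := hPhatsub nf
      · rw [← hS2']
        apply Finset.sum_le_sum
        intro z _
        by_cases hz : k+2 ≤ (z:ℕ)
        · rw [if_pos hz, if_pos (by omega)]
        · rw [if_neg hz]
          by_cases hz' : k+1 ≤ (z:ℕ)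
          · rw [if_pos hz']; exact hPhat0 nf z
          · rw [if_neg hz']
    -- the equation at (k+1, N)
    have hE1 : (1+β) * (∑ z : Fin (N+1), if k+1 ≤ (z:ℕ) then Phat nf z else 0)
        = (1+β) - β * q k1f := by
      have hLHS : (∑ z : Fin (N+1), Hf k1f z * Phat nf z)
          = (1+β) * ∑ z : Fin (N+1), (if k+1 ≤ (z:ℕ) then Phat nf z else 0) := by
        rw [Finset.mul_sum]
        apply Finset.sum_congr rfl
        intro z _
        rw [hH, hk1fv]
        by_cases hz : k+1 ≤ (z:ℕ)
        · rw [if_pos hz, if_pos hz, if_neg (by omega), if_neg (by omega)]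
        · simp [hz]
      have hRHS : (∑ z : Fin (N+1), P k1f z * Hf z nf) = (1+β) - β * q k1f := by
        have hpt : ∀ z : Fin (N+1), P k1f z * Hf z nf
            = P k1f z * (1+β) - (if (z:ℕ) ≤ k then β * P k1f z else 0) := by
          intro z
          rw [hH, hnfv]
          by_cases hz : (z:ℕ) ≤ k
          · rw [if_pos (show (z:ℕ) ≤ N by omega), if_pos hz,
              if_neg (show ¬ N ≤ k by omega), if_pos hz]; ring
          · rw [if_pos (show (z:ℕ) ≤ N by omega), if_neg hz,
              if_neg (show ¬ N ≤ k by omega), if_neg hz]; ring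
        rw [Finset.sum_congr rfl fun z _ => hpt z, Finset.sum_sub_distrib,
          ← Finset.sum_mul, hP1, one_mul]
        have : (∑ z : Fin (N+1), if (z:ℕ) ≤ k then β * P k1f z else 0)
            = β * ∑ z : Fin (N+1), (if (z:ℕ) ≤ k then P k1f z else 0) := by
          rw [Finset.mul_sum]
          apply Finset.sum_congr rfl
          intro z _
          by_cases hz : (z:ℕ) ≤ k
          · rw [if_pos hz, if_pos hz]
          · rw [if_neg hz, if_neg hz, mul_zero]
        rw [this, hPk1k]
      rw [← hLHS, E k1f nf, hRHS]
    rw [hS1, mul_one] at hE1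
    have : β * q k1f = 0 := by linarith
    rcases mul_eq_zero.mp this with h | h
    · exact h
    · exact absurd h hqk1pos.ne'
  subst hβ0
  -- STEP 2 : α = 0
  have hα0 : α = 0 := by
    -- equation at (k+1, k): B = (1+α) q_{k+1}
    have hB : (∑ z : Fin (N+1), if k+1 ≤ (z:ℕ) then Phat kf z else 0) = (1+α) * q k1f := by
      have hLHS : (∑ z : Fin (N+1), Hf k1f z * Phat kf z)
          = ∑ z : Fin (N+1), (if k+1 ≤ (z:ℕ) then Phat kf z else 0) := by
        apply Finset.sum_congr rfl
        intro z _
        rw [hH, hk1fv]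
        by_cases hz : k+1 ≤ (z:ℕ)
        · rw [if_pos hz, if_pos hz, if_neg (by omega), if_neg (by omega)]; ring
        · simp [hz]
      have hRHS : (∑ z : Fin (N+1), P k1f z * Hf z kf) = (1+α) * q k1f := by
        have hpt : ∀ z : Fin (N+1), P k1f z * Hf z kf
            = if (z:ℕ) ≤ k then (1+α) * P k1f z else 0 := by
          intro z
          rw [hH, hkfv]
          by_cases hz : (z:ℕ) ≤ k
          · rw [if_pos hz, if_pos hz, if_pos (le_refl k), if_pos hz]; ring
          · rw [if_neg hz, if_neg hz, mul_zero]
        rw [Finset.sum_congr rfl fun z _ => hpt z]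
        have : (∑ z : Fin (N+1), if (z:ℕ) ≤ k then (1+α) * P k1f z else 0)
            = (1+α) * ∑ z : Fin (N+1), (if (z:ℕ) ≤ k then P k1f z else 0) := by
          rw [Finset.mul_sum]
          apply Finset.sum_congr rfl
          intro z _
          by_cases hz : (z:ℕ) ≤ k
          · rw [if_pos hz, if_pos hz]
          · rw [if_neg hz, if_neg hz, mul_zero]
        rw [this, hPk1k]
      rw [← hLHS, E k1f kf, hRHS]
    -- equation at (0, k): (1+α) A + B = 1+α
    have hAB : (1+α) * (∑ z : Fin (N+1), if (z:ℕ) ≤ k then Phat kf z else 0)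
        + (∑ z : Fin (N+1), if k+1 ≤ (z:ℕ) then Phat kf z else 0) = 1+α := by
      have hLHS : (∑ z : Fin (N+1), Hf 0 z * Phat kf z)
          = (1+α) * (∑ z : Fin (N+1), if (z:ℕ) ≤ k then Phat kf z else 0)
            + (∑ z : Fin (N+1), if k+1 ≤ (z:ℕ) then Phat kf z else 0) := by
        rw [Finset.mul_sum, ← Finset.sum_add_distrib]
        apply Finset.sum_congr rfl
        intro z _
        rw [hH, Fin.val_zero]
        by_cases hz : (z:ℕ) ≤ k
        · rw [if_pos (Nat.zero_le _), if_pos (Nat.zero_le _), if_pos hz, if_pos hz,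
            if_neg (show ¬ k+1 ≤ (z:ℕ) by omega)]; ring
        · rw [if_pos (Nat.zero_le _), if_pos (Nat.zero_le _), if_neg hz, if_neg hz,
            if_pos (show k+1 ≤ (z:ℕ) by omega)]; ring
      have hRHS : (∑ z : Fin (N+1), P 0 z * Hf z kf) = 1+α := by
        have hpt : ∀ z : Fin (N+1), P 0 z * Hf z kf = P 0 z * (1+α) := by
          intro z
          by_cases hz : (z:ℕ) ≤ k
          · rw [hH, hkfv, if_pos hz, if_pos hz, if_pos (le_refl k)]
          · rw [htri 0 z (by simp only [Fin.val_zero]; omega), zero_mul, zero_mul]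
        rw [Finset.sum_congr rfl fun z _ => hpt z, ← Finset.sum_mul, hP1, one_mul]
      rw [← hLHS, E 0 kf, hRHS]
    -- row sum bound
    have hle1 : (∑ z : Fin (N+1), if (z:ℕ) ≤ k then Phat kf z else 0)
        + (∑ z : Fin (N+1), if k+1 ≤ (z:ℕ) then Phat kf z else 0) ≤ 1 := by
      have : (∑ z : Fin (N+1), Phat kf z)
          = (∑ z : Fin (N+1), if (z:ℕ) ≤ k then Phat kf z else 0)
            + (∑ z : Fin (N+1), if k+1 ≤ (z:ℕ) then Phat kf z else 0) := by
        rw [sum_split' (fun z => Phat kf z) (fun z => (z:ℕ) ≤ k)]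
        congr 1
        apply Finset.sum_congr rfl
        intro z _
        by_cases hz : (z:ℕ) ≤ k
        · rw [if_pos hz, if_neg (by omega)]
        · rw [if_neg hz, if_pos (by omega)]
      rw [← this]
      exact hPhatsub kf
    set A := (∑ z : Fin (N+1), if (z:ℕ) ≤ k then Phat kf z else 0) with hA
    set B := (∑ z : Fin (N+1), if k+1 ≤ (z:ℕ) then Phat kf z else 0) with hBdef
    have h1α : (0:ℝ) < 1 + α := by linarith
    have hAeq : A = 1 - q k1f := by
      have h : (1+α) * A = (1+α) * (1 - q k1f) := by
        have hexp : (1+α) * (1 - q k1f) = (1+α) - (1+α) * q k1f := by ring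
        rw [hexp, ← hB]
        linarith [hAB]
      exact mul_left_cancel₀ h1α.ne' h
    have : α * q k1f ≤ 0 := by
      have := hle1
      rw [hAeq, hB] at this
      nlinarith
    have hle : α ≤ 0 := by
      by_contra h
      push_neg at h
      nlinarith
    linarith
  subst hα0
  refine ⟨rfl, rfl, ?_⟩
  -- STEP 3: monotonicity
  intro x hx
  have hx1v : ((x + 1 : Fin (N+1)) : ℕ) = (x:ℕ) + 1 :=
    Fin.val_add_one_of_lt (by rw [Fin.lt_def, Fin.val_last]; omega : x < Fin.last N)
  -- E(x,x)
  have hExx : (∑ z : Fin (N+1), if (x:ℕ) ≤ (z:ℕ) then Phat x z else 0)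
      = ∑ z : Fin (N+1), (if (z:ℕ) ≤ (x:ℕ) then P x z else 0) := by
    have hLHS : (∑ z : Fin (N+1), Hf x z * Phat x z)
        = ∑ z : Fin (N+1), (if (x:ℕ) ≤ (z:ℕ) then Phat x z else 0) := by
      apply Finset.sum_congr rfl
      intro z _
      rw [hH]
      by_cases hz : (x:ℕ) ≤ (z:ℕ)
      · rw [if_pos hz, if_pos hz]
        by_cases h3 : (x:ℕ) ≤ k <;> by_cases h2 : (z:ℕ) ≤ k <;>
          simp [h3, h2]
      · rw [if_neg hz, if_neg hz, zero_mul]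
    have hRHS : (∑ z : Fin (N+1), P x z * Hf z x)
        = ∑ z : Fin (N+1), (if (z:ℕ) ≤ (x:ℕ) then P x z else 0) := by
      apply Finset.sum_congr rfl
      intro z _
      rw [hH]
      by_cases hz : (z:ℕ) ≤ (x:ℕ)
      · rw [if_pos hz, if_pos hz]
        by_cases h3 : (z:ℕ) ≤ k <;> by_cases h2 : (x:ℕ) ≤ k <;>
          simp [h3, h2]
      · rw [if_neg hz, if_neg hz, mul_zero]
    rw [← hLHS, E x x, hRHS]
  -- E(x+1,x)
  have hEx1x : (∑ z : Fin (N+1), if (x:ℕ)+1 ≤ (z:ℕ) then Phat x z else 0) = q (x+1) := by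
    have hLHS : (∑ z : Fin (N+1), Hf (x+1) z * Phat x z)
        = ∑ z : Fin (N+1), (if (x:ℕ)+1 ≤ (z:ℕ) then Phat x z else 0) := by
      apply Finset.sum_congr rfl
      intro z _
      rw [hH, hx1v]
      by_cases hz : (x:ℕ)+1 ≤ (z:ℕ)
      · rw [if_pos hz, if_pos hz]
        by_cases h3 : (x:ℕ)+1 ≤ k <;> by_cases h2 : (z:ℕ) ≤ k <;>
          simp [h3, h2]
      · rw [if_neg hz, if_neg hz, zero_mul]
    have hRHS : (∑ z : Fin (N+1), P (x+1) z * Hf z x) = q (x+1) := by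
      have hpt : ∀ z : Fin (N+1), P (x+1) z * Hf z x
          = if (z:ℕ) ≤ (x:ℕ) then P (x+1) z else 0 := by
        intro z
        rw [hH]
        by_cases hz : (z:ℕ) ≤ (x:ℕ)
        · rw [if_pos hz, if_pos hz]
          by_cases h3 : (z:ℕ) ≤ k <;> by_cases h2 : (x:ℕ) ≤ k <;>
            simp [h3, h2]
        · rw [if_neg hz, if_neg hz, mul_zero]
      rw [Finset.sum_congr rfl fun z _ => hpt z]
      rw [sum_ite_single' (fun z => P (x+1) z) (fun z : Fin (N+1) => (z:ℕ) ≤ (x:ℕ)) x (le_refl (x:ℕ)) ?_]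
      · have h := hdown (x+1) (by rw [hx1v]; omega)
        rwa [add_sub_cancel_right] at h
      · intro z hz hzx
        apply htri
        right
        rw [hx1v]
        have : (z:ℕ) ≠ (x:ℕ) := fun h => hzx (Fin.ext h)
        omega
    rw [← hLHS, E (x+1) x, hRHS]
  -- sum over z ≤ x of P x z = 1 - p x
  have hPsum : (∑ z : Fin (N+1), if (z:ℕ) ≤ (x:ℕ) then P x z else 0) = 1 - p x := by
    have hsplit := sum_split' (fun z => P x z) (fun z => (z:ℕ) ≤ (x:ℕ))
    rw [hP1 x] at hsplit
    have hupper : (∑ z : Fin (N+1), if (z:ℕ) ≤ (x:ℕ) then 0 else P x z) = p x := by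
      have : (∑ z : Fin (N+1), if (z:ℕ) ≤ (x:ℕ) then 0 else P x z)
          = ∑ z : Fin (N+1), (if (x:ℕ)+1 ≤ (z:ℕ) then P x z else 0) := by
        apply Finset.sum_congr rfl
        intro z _
        by_cases hz : (z:ℕ) ≤ (x:ℕ)
        · rw [if_pos hz, if_neg (by omega)]
        · rw [if_neg hz, if_pos (by omega)]
      rw [this, sum_ite_single' _ _ (x+1) (by rw [hx1v]) ?_]
      · exact hup x hx
      · intro z hz hzx
        apply htri
        left
        have : (z:ℕ) ≠ (x:ℕ)+1 := fun h => hzx (Fin.ext (by rw [hx1v, h]))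
        omega
    linarith [hsplit, hupper]
  -- combine
  have hmono : (∑ z : Fin (N+1), if (x:ℕ)+1 ≤ (z:ℕ) then Phat x z else 0)
      ≤ ∑ z : Fin (N+1), (if (x:ℕ) ≤ (z:ℕ) then Phat x z else 0) := by
    apply Finset.sum_le_sum
    intro z _
    by_cases hz : (x:ℕ)+1 ≤ (z:ℕ)
    · rw [if_pos hz, if_pos (by omega)]
    · rw [if_neg hz]
      by_cases hz' : (x:ℕ) ≤ (z:ℕ)
      · rw [if_pos hz']; exact hPhat0 x z
      · rw [if_neg hz']
  rw [hEx1x] at hmono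
  rw [hExx, hPsum] at hmono
  linarith
end

section
/- Let I and Ĩ be finite nonempty sets, let P be an irreducible stochastic matrix on I with stationary distribution π, let Λ be a stochastic Ĩ×I matrix and P̃ a stochastic Ĩ×Ĩ matrix with the intertwining relation P̃·Λ = Λ·P. Suppose ∂̃ ∈ Ĩ is an absorbing state of P̃ and there exists d ∈ I with Λ(x,d) = π(d)·1{x = ∂̃} for all x ∈ Ĩ (i.e. Λ·e_d = π(d)·e_∂̃). Then the intertwined chain is a sharp dual: for every probability vector π̃₀ on Ĩ, setting π₀ := Λᵀ·π̃₀ (so π₀' = π̃₀'·Λ), π_n' := π₀'·Pⁿ, and π̃_n' := π̃₀'·P̃ⁿ, one has for every n ≥ 0: max_{y∈I} (1 − π_n(y)/π(y)) = 1 − π̃_n(∂̃). (The left-hand side is the separation discrepancy sep(π_n, π), and the right-hand side equals the probability that the absorption time of the P̃-chain at ∂̃ exceeds n.) -/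
open Matrix Finset

lemma powNonneg {I : Type*} [Fintype I] [DecidableEq I] (P : Matrix I I ℝ)
    (h : ∀ x y, 0 ≤ P x y) (n : ℕ) : ∀ x y, 0 ≤ (P ^ n) x y := by
  induction n with
  | zero => intro x y; simp [Matrix.one_apply]; split <;> norm_num
  | succ n ih =>
    intro x y
    rw [pow_succ, Matrix.mul_apply]
    exact Finset.sum_nonneg fun k _ => mul_nonneg (ih x k) (h k y)

lemma powRow {I : Type*} [Fintype I] [DecidableEq I] (P : Matrix I I ℝ)
    (h : ∀ x, ∑ y, P x y = 1) (n : ℕ) : ∀ x, ∑ y, (P ^ n) x y = 1 := by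
  induction n with
  | zero => intro x; rw [pow_zero]; simp [Matrix.one_apply]
  | succ n ih =>
    intro x
    simp only [pow_succ, Matrix.mul_apply]
    rw [Finset.sum_comm]
    simp_rw [← Finset.mul_sum, h, mul_one, ih]

lemma statUnique {I : Type*} [Fintype I] [DecidableEq I] [Nonempty I]
    (P : Matrix I I ℝ) (π : I → ℝ)
    (hP0 : ∀ x y, 0 ≤ P x y)
    (hirr : ∀ x y, ∃ n ≥ 1, 0 < (P ^ n) x y)
    (hπpos : ∀ x, 0 < π x) (hπ1 : ∑ x, π x = 1)
    (hπP : ∀ y, ∑ x, π x * P x y = π y)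
    (μ : I → ℝ) (hμ0 : ∀ x, 0 ≤ μ x) (hμ1 : ∑ x, μ x = 1)
    (hμP : ∀ y, ∑ x, μ x * P x y = μ y) : μ = π := by
  obtain ⟨y0, -, hy0⟩ := Finset.exists_min_image Finset.univ (fun y => μ y / π y)
    Finset.univ_nonempty
  set c : ℝ := μ y0 / π y0 with hc
  set ν : I → ℝ := fun y => μ y - c * π y with hν
  have hν0 : ∀ y, 0 ≤ ν y := by
    intro y
    have := hy0 y (Finset.mem_univ y)
    have h2 : c * π y ≤ μ y := (le_div_iff₀ (hπpos y)).mp this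
    simpa [hν] using sub_nonneg.mpr h2
  have hνP : ∀ y, ∑ x, ν x * P x y = ν y := by
    intro y
    simp only [hν, sub_mul, Finset.sum_sub_distrib, hμP, mul_assoc, ← Finset.mul_sum, hπP]
  have hνPn : ∀ n y, ∑ x, ν x * (P ^ n) x y = ν y := by
    intro n
    induction n with
    | zero => intro y; rw [pow_zero]; simp [Matrix.one_apply, mul_ite]
    | succ n ih =>
      intro y
      simp only [pow_succ, Matrix.mul_apply, Finset.mul_sum]
      rw [Finset.sum_comm]
      simp_rw [← mul_assoc, ← Finset.sum_mul, ih, hνP]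
  have hνy0 : ν y0 = 0 := by
    show μ y0 - c * π y0 = 0
    rw [hc, div_mul_cancel₀ _ (ne_of_gt (hπpos y0))]
    ring
  have hzero : ∀ x, ν x = 0 := by
    intro x
    obtain ⟨n, -, hn⟩ := hirr x y0
    have hsum := hνPn n y0
    rw [hνy0] at hsum
    have hterm : ∀ z ∈ Finset.univ, (0:ℝ) ≤ ν z * (P ^ n) z y0 :=
      fun z _ => mul_nonneg (hν0 z) (powNonneg P hP0 n z y0)
    have := (Finset.sum_eq_zero_iff_of_nonneg hterm).mp hsum x (Finset.mem_univ x)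
    rcases mul_eq_zero.mp this with h | h
    · exact h
    · exact absurd h (ne_of_gt hn)
  have hμeq : ∀ x, μ x = c * π x := by
    intro x
    have := hzero x
    simp only [hν] at this
    linarith
  have hc1 : c = 1 := by
    have : ∑ x, μ x = ∑ x, c * π x := Finset.sum_congr rfl fun x _ => hμeq x
    rw [hμ1, ← Finset.mul_sum, hπ1, mul_one] at this
    linarith
  funext x
  rw [hμeq x, hc1, one_mul]

/-- Proposition prop9 (sharpness): if `P̃·Λ = Λ·P`, `∂̃` is absorbing for `P̃` and
`Λ·e_d = π(d)·e_∂̃` for some witness `d`, then for every linked initial condition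
`π₀' = π̃₀'·Λ` and every `n`, the separation discrepancy
`max_y (1 − π_n(y)/π(y))` equals `1 − π̃_n(∂̃)`. -/
theorem stmt18 {I J : Type*} [Fintype I] [Fintype J] [DecidableEq I] [DecidableEq J]
    [Nonempty I] [Nonempty J]
    (P : Matrix I I ℝ) (π : I → ℝ) (Λ : Matrix J I ℝ) (Ptil : Matrix J J ℝ)
    (hP0 : ∀ x y, 0 ≤ P x y) (hP1 : ∀ x, ∑ y, P x y = 1)
    (hirr : ∀ x y, ∃ n ≥ 1, 0 < (P ^ n) x y)
    (hπpos : ∀ x, 0 < π x) (hπ1 : ∑ x, π x = 1)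
    (hπP : ∀ y, ∑ x, π x * P x y = π y)
    (hΛ0 : ∀ x y, 0 ≤ Λ x y) (hΛ1 : ∀ x, ∑ y, Λ x y = 1)
    (hPtil0 : ∀ x y, 0 ≤ Ptil x y) (hPtil1 : ∀ x, ∑ y, Ptil x y = 1)
    (hint : Ptil * Λ = Λ * P)
    (dtil : J) (habs : ∀ y, Ptil dtil y = if y = dtil then 1 else 0)
    (d : I) (hwit : ∀ x : J, Λ x d = π d * (if x = dtil then 1 else 0)) :
    ∀ πt0 : J → ℝ, (∀ x, 0 ≤ πt0 x) → (∑ x, πt0 x = 1) → ∀ n : ℕ,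
      Finset.univ.sup' Finset.univ_nonempty
        (fun y : I => 1 - (Matrix.vecMul (Matrix.vecMul πt0 Λ) (P ^ n)) y / π y) =
      1 - (Matrix.vecMul πt0 (Ptil ^ n)) dtil := by
  intro πt0 hπt0 hπt1 n
  have hintn : ∀ m : ℕ, Ptil ^ m * Λ = Λ * P ^ m := by
    intro m
    induction m with
    | zero => simp
    | succ m ih =>
      calc Ptil ^ (m + 1) * Λ = Ptil ^ m * (Ptil * Λ) := by
            rw [pow_succ, Matrix.mul_assoc]
        _ = Ptil ^ m * Λ * P := by rw [hint, Matrix.mul_assoc]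
        _ = Λ * P ^ (m + 1) := by rw [ih, pow_succ, Matrix.mul_assoc]
  have hrow : ∀ y, Λ dtil y = π y := by
    have hμP : ∀ y, ∑ x, Λ dtil x * P x y = Λ dtil y := by
      intro y
      have h1 := congrFun (congrFun hint dtil) y
      simp only [Matrix.mul_apply] at h1
      rw [← h1]
      simp [habs, ite_mul]
    have := statUnique P π hP0 hirr hπpos hπ1 hπP (Λ dtil) (hΛ0 dtil) (hΛ1 dtil) hμP
    exact fun y => congrFun this y
  set νt : J → ℝ := Matrix.vecMul πt0 (Ptil ^ n) with hνt
  have hνt0 : ∀ x, 0 ≤ νt x := by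
    intro x
    simp only [hνt, Matrix.vecMul, dotProduct]
    exact Finset.sum_nonneg fun z _ =>
      mul_nonneg (hπt0 z) (powNonneg Ptil hPtil0 n z x)
  have hπn : Matrix.vecMul (Matrix.vecMul πt0 Λ) (P ^ n) = Matrix.vecMul νt Λ := by
    rw [hνt, Matrix.vecMul_vecMul, Matrix.vecMul_vecMul, hintn]
  rw [hπn]
  have hd : (Matrix.vecMul νt Λ) d = νt dtil * π d := by
    simp [Matrix.vecMul, dotProduct, hwit, mul_ite]
  apply le_antisymm
  · apply Finset.sup'_le
    intro y _
    have hub : νt dtil * π y ≤ (Matrix.vecMul νt Λ) y := by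
      have h2 : νt dtil * Λ dtil y ≤ ∑ x, νt x * Λ x y :=
        Finset.single_le_sum (fun x _ => mul_nonneg (hνt0 x) (hΛ0 x y))
          (Finset.mem_univ dtil)
      rw [hrow y] at h2
      simpa [Matrix.vecMul, dotProduct] using h2
    have h3 : νt dtil ≤ (Matrix.vecMul νt Λ) y / π y := (le_div_iff₀ (hπpos y)).mpr hub
    linarith
  · have h4 := Finset.le_sup' (fun y : I => 1 - (Matrix.vecMul νt Λ) y / π y)
      (Finset.mem_univ d)
    have h5 : (1 : ℝ) - (Matrix.vecMul νt Λ) d / π d = 1 - νt dtil := by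
      rw [hd, mul_div_assoc, div_self (ne_of_gt (hπpos d)), mul_one]
    rw [h5] at h4
    exact h4
end

section
/- Let I and J be finite nonempty sets, let P be an irreducible stochastic matrix on I with stationary distribution π, let H be an entrywise nonnegative I×J matrix each of whose columns contains a strictly positive entry, and let P̂ be an entrywise nonnegative substochastic J×J matrix with H·P̂ᵀ = P·H. Set φ := Hᵀ·π, Λ := D_φ⁻¹·Hᵀ·D_π, P̃ := D_φ⁻¹·P̂·D_φ, and ←P(x,y) := π(y)·P(y,x)/π(x). Suppose â ∈ J is an absorbing state of P̂ and there exist d ∈ I and c > 0 with H(d,y) = c·1{y = â} for all y ∈ J. Then â is an absorbing state of P̃, and P̃ is a sharp dual of ←P: for every probability vector π̃₀ on J, setting π₀ := Λᵀ·π̃₀ (so π₀' = π̃₀'·Λ), π_n' := π₀'·(←P)ⁿ, and π̃_n' := π̃₀'·P̃ⁿ, one has for every n ≥ 0: max_{y∈I} (1 − π_n(y)/π(y)) = 1 − π̃_n(â). -/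
open Matrix Finset

/-- Proposition prop9' (i): under the duality setup, if `â` is absorbing for the
substochastic dual `P̂` and the `d`-row of `H` is `c·e_â'` for some `c > 0`, then `â` is
absorbing for `P̃ = D_φ⁻¹·P̂·D_φ`, and `P̃` is a sharp dual of `←P`: for every linked
initial condition `π₀' = π̃₀'·Λ` and every `n`,
`max_y (1 − π_n(y)/π(y)) = 1 − π̃_n(â)`. -/
theorem stmt19 {I J : Type*} [Fintype I] [Fintype J] [DecidableEq I] [DecidableEq J]
    [Nonempty I] [Nonempty J]
    (P : Matrix I I ℝ) (π : I → ℝ) (H : Matrix I J ℝ) (Phat : Matrix J J ℝ)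
    (hP0 : ∀ x y, 0 ≤ P x y) (hP1 : ∀ x, ∑ y, P x y = 1)
    (hirr : ∀ x y, ∃ n ≥ 1, 0 < (P ^ n) x y)
    (hπpos : ∀ x, 0 < π x) (hπ1 : ∑ x, π x = 1)
    (hπP : ∀ y, ∑ x, π x * P x y = π y)
    (hH0 : ∀ x y, 0 ≤ H x y) (hHcol : ∀ y, ∃ x, 0 < H x y)
    (hPhat0 : ∀ x y, 0 ≤ Phat x y) (hPhatsub : ∀ x, ∑ y, Phat x y ≤ 1)
    (hdual : H * Phatᵀ = P * H)
    (ahat : J) (habs : ∀ y, Phat ahat y = if y = ahat then 1 else 0)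
    (d : I) (c : ℝ) (hc : 0 < c) (hrow : ∀ y, H d y = c * (if y = ahat then 1 else 0)) :
    let φ : J → ℝ := Hᵀ.mulVec π
    let Λ : Matrix J I ℝ := Matrix.diagonal (fun y => (φ y)⁻¹) * Hᵀ * Matrix.diagonal π
    let Ptil : Matrix J J ℝ := Matrix.diagonal (fun y => (φ y)⁻¹) * Phat * Matrix.diagonal φ
    (∀ y, Ptil ahat y = if y = ahat then 1 else 0) ∧
    (∀ πt0 : J → ℝ, (∀ x, 0 ≤ πt0 x) → (∑ x, πt0 x = 1) → ∀ n : ℕ,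
      Finset.univ.sup' Finset.univ_nonempty
        (fun y : I =>
          1 - (Matrix.vecMul (Matrix.vecMul πt0 Λ) ((revKernel P π) ^ n)) y / π y) =
      1 - (Matrix.vecMul πt0 (Ptil ^ n)) ahat) := by
  intro φ Λ Ptil
  have hφ : ∀ y, φ y = ∑ x, H x y * π x := by
    intro y
    show Hᵀ.mulVec π y = _
    simp [Matrix.mulVec, dotProduct, Matrix.transpose_apply]
  have hφpos : ∀ y, 0 < φ y := by
    intro y
    rw [hφ]
    obtain ⟨x, hx⟩ := hHcol y
    exact Finset.sum_pos' (fun i _ => mul_nonneg (hH0 i y) (hπpos i).le)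
      ⟨x, Finset.mem_univ x, mul_pos hx (hπpos x)⟩
  have hΛ : ∀ y x, Λ y x = (φ y)⁻¹ * H x y * π x := by
    intro y x
    show ((Matrix.diagonal (fun y => (φ y)⁻¹) * Hᵀ) * Matrix.diagonal π) y x = _
    rw [Matrix.mul_diagonal, Matrix.diagonal_mul, Matrix.transpose_apply]
  have hPtil : ∀ y z, Ptil y z = (φ y)⁻¹ * Phat y z * φ z := by
    intro y z
    show ((Matrix.diagonal (fun y => (φ y)⁻¹) * Phat) * Matrix.diagonal φ) y z = _
    rw [Matrix.mul_diagonal, Matrix.diagonal_mul]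
  -- powers of P are stochastic
  have hPn0 : ∀ n x y, 0 ≤ (P ^ n) x y := by
    intro n
    induction n with
    | zero => intro x y; rw [pow_zero]; by_cases h : x = y <;> simp [Matrix.one_apply, h]
    | succ n ih =>
      intro x y
      rw [pow_succ, Matrix.mul_apply]
      exact Finset.sum_nonneg fun z _ => mul_nonneg (ih x z) (hP0 z y)
  have hPn1 : ∀ n x, ∑ y, (P ^ n) x y = 1 := by
    intro n
    induction n with
    | zero => intro x; simp [Matrix.one_apply]
    | succ n ih =>
      intro x
      simp only [pow_succ, Matrix.mul_apply]
      rw [Finset.sum_comm]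
      have : ∀ z, ∑ y, (P ^ n) x z * P z y = (P ^ n) x z := by
        intro z; rw [← Finset.mul_sum, hP1, mul_one]
      rw [Finset.sum_congr rfl fun z _ => this z, ih]
  -- H · ahat is harmonic
  have hharm : ∀ x, ∑ z, P x z * H z ahat = H x ahat := by
    intro x
    have h1 : (H * Phatᵀ) x ahat = (P * H) x ahat := by rw [hdual]
    simp only [Matrix.mul_apply, Matrix.transpose_apply] at h1
    rw [← h1]
    simp [habs, mul_ite]
  have hPnharm : ∀ n x, ∑ z, (P ^ n) x z * H z ahat = H x ahat := by
    intro n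
    induction n with
    | zero => intro x; simp [Matrix.one_apply, ite_mul]
    | succ n ih =>
      intro x
      simp only [pow_succ', Matrix.mul_apply, Finset.sum_mul]
      rw [Finset.sum_comm]
      have : ∀ w, ∑ z, P x w * (P ^ n) w z * H z ahat = P x w * H w ahat := by
        intro w
        rw [show (fun z => P x w * (P ^ n) w z * H z ahat)
            = fun z => P x w * ((P ^ n) w z * H z ahat) from funext fun z => by ring]
        rw [← Finset.mul_sum, ih w]
      rw [Finset.sum_congr rfl fun w _ => this w, hharm x]
  -- H · ahat is constant, equal to c
  have hHconst : ∀ x, H x ahat = c := by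
    obtain ⟨x₀, _, hx₀⟩ := Finset.exists_min_image Finset.univ (fun x => H x ahat)
      Finset.univ_nonempty
    have hall : ∀ z, H z ahat = H x₀ ahat := by
      intro z
      obtain ⟨n, _, hnpos⟩ := hirr x₀ z
      have hsum : ∑ w, (P ^ n) x₀ w * (H w ahat - H x₀ ahat) = 0 := by
        simp only [mul_sub, Finset.sum_sub_distrib]
        rw [hPnharm n x₀, ← Finset.sum_mul, hPn1 n x₀, one_mul, sub_self]
      have hterm := (Finset.sum_eq_zero_iff_of_nonneg (fun w _ =>
        mul_nonneg (hPn0 n x₀ w) (sub_nonneg.2 (hx₀ w (Finset.mem_univ w))))).1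
        hsum z (Finset.mem_univ z)
      rcases mul_eq_zero.1 hterm with h | h
      · exact absurd h hnpos.ne'
      · linarith [sub_eq_zero.1 h]
    have hd : H d ahat = c := by rw [hrow]; simp
    intro x
    rw [hall x, ← hall d, hd]
  have hφa : φ ahat = c := by
    rw [hφ, Finset.sum_congr rfl fun x _ => by rw [hHconst x], ← Finset.mul_sum, hπ1, mul_one]
  constructor
  · intro y
    rw [hPtil, habs]
    by_cases h : y = ahat
    · simp only [h, if_pos rfl, if_true, mul_one]
      exact inv_mul_cancel₀ (hφpos ahat).ne'
    · simp [h]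
  · -- intertwining
    have key : ∀ y x, ∑ z, Ptil y z * Λ z x = ∑ z, Λ y z * revKernel P π z x := by
      intro y x
      have hdxy : ∑ z, H x z * Phat y z = ∑ z, P x z * H z y := by
        have h1 : (H * Phatᵀ) x y = (P * H) x y := by rw [hdual]
        simpa [Matrix.mul_apply, Matrix.transpose_apply] using h1
      have L : ∀ z, Ptil y z * Λ z x = (φ y)⁻¹ * π x * (H x z * Phat y z) := by
        intro z
        rw [hPtil, hΛ]
        have hz : φ z ≠ 0 := (hφpos z).ne'
        calc ((φ y)⁻¹ * Phat y z * φ z) * ((φ z)⁻¹ * H x z * π x)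
            = (φ y)⁻¹ * π x * (H x z * Phat y z) * (φ z * (φ z)⁻¹) := by ring
          _ = (φ y)⁻¹ * π x * (H x z * Phat y z) := by
              rw [mul_inv_cancel₀ hz, mul_one]
      have R : ∀ z, Λ y z * revKernel P π z x = (φ y)⁻¹ * π x * (P x z * H z y) := by
        intro z
        rw [hΛ]
        show ((φ y)⁻¹ * H z y * π z) * (π x * P x z / π z) = _
        have hz : π z ≠ 0 := (hπpos z).ne'
        rw [div_eq_mul_inv]
        calc ((φ y)⁻¹ * H z y * π z) * (π x * P x z * (π z)⁻¹)
            = (φ y)⁻¹ * π x * (P x z * H z y) * (π z * (π z)⁻¹) := by ring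
          _ = (φ y)⁻¹ * π x * (P x z * H z y) := by
              rw [mul_inv_cancel₀ hz, mul_one]
      rw [Finset.sum_congr rfl fun z _ => L z, Finset.sum_congr rfl fun z _ => R z,
        ← Finset.mul_sum, ← Finset.mul_sum, hdxy]
    have hint : Ptil * Λ = Λ * revKernel P π := by
      ext y x
      simpa [Matrix.mul_apply] using key y x
    have hintn : ∀ n : ℕ, Ptil ^ n * Λ = Λ * revKernel P π ^ n := by
      intro n
      induction n with
      | zero => simp
      | succ n ih =>
        rw [pow_succ, pow_succ, Matrix.mul_assoc, hint, ← Matrix.mul_assoc, ih,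
          Matrix.mul_assoc]
    -- nonnegativity of Ptil powers
    have hPtil0 : ∀ y z, 0 ≤ Ptil y z := by
      intro y z
      rw [hPtil]
      exact mul_nonneg (mul_nonneg (inv_nonneg.2 (hφpos y).le) (hPhat0 y z)) (hφpos z).le
    have hPtiln0 : ∀ n y z, 0 ≤ (Ptil ^ n) y z := by
      intro n
      induction n with
      | zero => intro y z; rw [pow_zero]; by_cases h : y = z <;> simp [Matrix.one_apply, h]
      | succ n ih =>
        intro y z
        rw [pow_succ, Matrix.mul_apply]
        exact Finset.sum_nonneg fun w _ => mul_nonneg (ih y w) (hPtil0 w z)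
    intro πt0 h0 _ n
    set w : J → ℝ := Matrix.vecMul πt0 (Ptil ^ n) with hw
    have hw0 : ∀ y, 0 ≤ w y := by
      intro y
      rw [hw]
      show 0 ≤ ∑ z, πt0 z * (Ptil ^ n) z y
      exact Finset.sum_nonneg fun z _ => mul_nonneg (h0 z) (hPtiln0 n z y)
    have hfun : (fun y : I =>
        1 - (Matrix.vecMul (Matrix.vecMul πt0 Λ) ((revKernel P π) ^ n)) y / π y)
        = fun x : I => 1 - ∑ y, w y * (φ y)⁻¹ * H x y := by
      funext x
      rw [Matrix.vecMul_vecMul, ← hintn n, ← Matrix.vecMul_vecMul]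
      have hval : Matrix.vecMul w Λ x = (∑ y, w y * (φ y)⁻¹ * H x y) * π x := by
        show ∑ y, w y * Λ y x = _
        rw [Finset.sum_mul]
        refine Finset.sum_congr rfl fun y _ => ?_
        rw [hΛ]; ring
      rw [hval, mul_div_assoc, div_self (hπpos x).ne', mul_one]
    rw [hfun]
    have hterm_a : ∀ x, w ahat * (φ ahat)⁻¹ * H x ahat = w ahat := by
      intro x
      rw [hφa, hHconst x, mul_assoc, inv_mul_cancel₀ hc.ne', mul_one]
    apply le_antisymm
    · apply Finset.sup'_le
      intro x _
      have hle : w ahat * (φ ahat)⁻¹ * H x ahat ≤ ∑ y, w y * (φ y)⁻¹ * H x y :=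
        Finset.single_le_sum (f := fun y => w y * (φ y)⁻¹ * H x y)
          (fun y _ => mul_nonneg (mul_nonneg (hw0 y) (inv_nonneg.2 (hφpos y).le)) (hH0 x y))
          (Finset.mem_univ ahat)
      rw [hterm_a x] at hle
      linarith
    · have hsumd : ∑ y, w y * (φ y)⁻¹ * H d y = w ahat := by
        rw [Finset.sum_congr rfl fun y _ => by rw [hrow y]]
        simp only [mul_ite, mul_one, mul_zero]
        rw [Finset.sum_ite_eq' Finset.univ ahat (fun y => w y * (φ y)⁻¹ * c)]
        simp only [Finset.mem_univ, if_true]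
        rw [hφa, mul_assoc, inv_mul_cancel₀ hc.ne', mul_one]
      have hd : (1 : ℝ) - w ahat = (fun x : I => 1 - ∑ y, w y * (φ y)⁻¹ * H x y) d := by
        simp [hsumd]
      rw [hd]
      exact Finset.le_sup' (fun x : I => 1 - ∑ y, w y * (φ y)⁻¹ * H x y) (Finset.mem_univ d)
end
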